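/- arXiv:1508.00176 — 6 statements merged into one kernel-verified Lean document; each statement's English description precedes it below -/
import Mathlib

section
/- If f : ℝ → ℝ satisfies lim_{x→∞} f(x) = 0, and there exists λ > 1 and l ∈ ℝ such that lim_{x→∞} x^λ (f(x) - f(x+1)) = l, then lim_{x→∞} x^(λ-1) f(x) = l/(λ-1). -/
open Filter Real Topology

/-! With `G x = x ^ (1 - λ) / (λ - 1)` we have `x ^ λ (G x - G (x + 1)) → 1`, so replacing `f` by
`f - l G` reduces the claim to `l = 0`. For large `y` then
`|h y - h (y + 1)| ≤ ε y ^ (-λ) ≤ ε 2 ^ λ (G y - G (y + 1))`, and telescoping along `x, x + 1, …`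
(using `h → 0`) gives `|h x| ≤ ε 2 ^ λ G x`, i.e. `x ^ (λ - 1) |h x| ≤ ε 2 ^ λ / (λ - 1)`. -/

theorem abs_le_of_tendsto_zero_of_abs_sub_succ_le {u v : ℕ → ℝ} (hu : Tendsto u atTop (𝓝 0))
    (hv : ∀ n, 0 ≤ v n) (huv : ∀ n, |u n - u (n + 1)| ≤ v n - v (n + 1)) : |u 0| ≤ v 0 := by
  have htelescope : ∀ n, |u 0 - u n| ≤ v 0 - v n := by
    intro n
    induction n with
    | zero => simp
    | succ n ih =>
      calc |u 0 - u (n + 1)| ≤ |u 0 - u n| + |u n - u (n + 1)| := abs_sub_le _ _ _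
        _ ≤ v 0 - v (n + 1) := by linarith [huv n]
  have hlim : Tendsto (fun n => |u 0 - u n|) atTop (𝓝 |u 0|) := by
    simpa using (tendsto_const_nhds.sub hu).abs
  exact le_of_tendsto' hlim fun n => (htelescope n).trans (by linarith [hv n])

section RpowTail

variable {lam : ℝ}

theorem sub_rpow_one_sub_div_mem_Icc (hlam : 1 < lam) {a : ℝ} (ha : 0 < a) :
    (a ^ (1 - lam) - (a + 1) ^ (1 - lam)) / (lam - 1) ∈ Set.Icc ((a + 1) ^ (-lam)) (a ^ (-lam)) := by
  have hderiv : ∀ t, 0 < t → HasDerivAt (fun t : ℝ => t ^ (1 - lam)) ((1 - lam) * t ^ (-lam)) t :=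
    fun t ht => by
      simpa using Real.hasDerivAt_rpow_const (x := t) (p := 1 - lam) (Or.inl ht.ne')
  obtain ⟨c, ⟨hac, hca⟩, hc⟩ := exists_hasDerivAt_eq_slope (fun t : ℝ => t ^ (1 - lam))
    (fun t => (1 - lam) * t ^ (-lam)) (lt_add_one a)
    (fun t ht => (hderiv t (ha.trans_le ht.1)).continuousAt.continuousWithinAt)
    (fun t ht => hderiv t (ha.trans ht.1))
  have hmid : (a ^ (1 - lam) - (a + 1) ^ (1 - lam)) / (lam - 1) = c ^ (-lam) := by
    rw [add_sub_cancel_left, div_one] at hc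
    rw [div_eq_iff (by linarith)]
    linarith
  rw [hmid]
  exact ⟨rpow_le_rpow_of_nonpos (ha.trans hac) hca.le (by linarith),
    rpow_le_rpow_of_nonpos ha hac.le (by linarith)⟩

theorem tendsto_rpow_mul_sub_rpow_succ_div (hlam : 1 < lam) :
    Tendsto (fun x : ℝ => x ^ lam * ((x ^ (1 - lam) - (x + 1) ^ (1 - lam)) / (lam - 1)))
      atTop (𝓝 1) := by
  have hlower : Tendsto (fun x : ℝ => (1 + x⁻¹) ^ (-lam)) atTop (𝓝 1) := by
    simpa using (tendsto_const_nhds.add tendsto_inv_atTop_zero).rpow_const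
      (Or.inl (by norm_num : (1 : ℝ) + 0 ≠ 0)) (p := -lam)
  refine tendsto_of_tendsto_of_tendsto_of_le_of_le' hlower tendsto_const_nhds ?_ ?_
  all_goals filter_upwards [eventually_gt_atTop 0] with x hx
  · have hrw : (1 + x⁻¹) ^ (-lam) = x ^ lam * (x + 1) ^ (-lam) := by
      rw [show 1 + x⁻¹ = (x + 1) / x by field_simp, div_rpow (by linarith) hx.le,
        rpow_neg hx.le, div_inv_eq_mul, mul_comm]
    rw [hrw]
    exact mul_le_mul_of_nonneg_left (sub_rpow_one_sub_div_mem_Icc hlam hx).1 (by positivity)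
  · calc x ^ lam * ((x ^ (1 - lam) - (x + 1) ^ (1 - lam)) / (lam - 1))
        ≤ x ^ lam * x ^ (-lam) :=
          mul_le_mul_of_nonneg_left (sub_rpow_one_sub_div_mem_Icc hlam hx).2 (by positivity)
      _ = 1 := by rw [← rpow_add hx, add_neg_cancel, rpow_zero]

theorem rpow_sub_one_mul_rpow_one_sub_div {x : ℝ} (hx : 0 < x) :
    x ^ (lam - 1) * (x ^ (1 - lam) / (lam - 1)) = 1 / (lam - 1) := by
  rw [mul_div_assoc', ← rpow_add hx, show lam - 1 + (1 - lam) = 0 by ring, rpow_zero]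

theorem rpow_neg_le_two_rpow_mul_sub_rpow_succ_div (hlam : 1 < lam) {y : ℝ} (hy : 1 ≤ y) :
    y ^ (-lam) ≤ 2 ^ lam * ((y ^ (1 - lam) - (y + 1) ^ (1 - lam)) / (lam - 1)) := by
  have hy0 : 0 < y := by linarith
  calc y ^ (-lam) = (1 / y) ^ lam := by rw [one_div, inv_rpow hy0.le, rpow_neg hy0.le]
    _ ≤ (2 / (y + 1)) ^ lam := by
      gcongr ?_ ^ lam
      rw [div_le_div_iff₀ hy0 (by linarith)]
      linarith
    _ = 2 ^ lam * (y + 1) ^ (-lam) := by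
      rw [div_rpow (by norm_num) (by linarith), rpow_neg (by linarith), div_eq_mul_inv]
    _ ≤ _ := by gcongr; exact (sub_rpow_one_sub_div_mem_Icc hlam hy0).1

theorem tendsto_rpow_sub_one_mul_of_tendsto_rpow_mul_sub {h : ℝ → ℝ} (hlam : 1 < lam)
    (hh : Tendsto h atTop (𝓝 0))
    (hdiff : Tendsto (fun x => x ^ lam * (h x - h (x + 1))) atTop (𝓝 0)) :
    Tendsto (fun x => x ^ (lam - 1) * h x) atTop (𝓝 0) := by
  have hlam' : 0 < lam - 1 := by linarith
  rw [NormedAddGroup.tendsto_nhds_zero]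
  intro ε hε
  set c := ε * (lam - 1) / 2 ^ (lam + 1) with hc_def
  have hc : 0 < c := by positivity
  obtain ⟨X, hX⟩ := eventually_atTop.1 (NormedAddGroup.tendsto_nhds_zero.1 hdiff c hc)
  filter_upwards [eventually_ge_atTop (max X 1)] with x hx
  have hx1 : 1 ≤ x := le_of_max_le_right hx
  have hstep : ∀ y, max X 1 ≤ y → |h y - h (y + 1)| ≤
      c * 2 ^ lam * ((y ^ (1 - lam) - (y + 1) ^ (1 - lam)) / (lam - 1)) := by
    intro y hy
    have hy1 : 1 ≤ y := le_of_max_le_right hy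
    have hdy : |h y - h (y + 1)| ≤ c * y ^ (-lam) := by
      have := (hX y (le_of_max_le_left hy)).le
      rw [norm_mul, norm_of_nonneg (by positivity), Real.norm_eq_abs,
        ← le_div_iff₀' (by positivity), div_eq_mul_inv, ← rpow_neg (by linarith)] at this
      linarith
    rw [mul_assoc]
    exact hdy.trans (by gcongr; exact rpow_neg_le_two_rpow_mul_sub_rpow_succ_div hlam hy1)
  have hbound : |h x| ≤ c * 2 ^ lam * (x ^ (1 - lam) / (lam - 1)) := by
    have := abs_le_of_tendsto_zero_of_abs_sub_succ_le (u := fun n : ℕ => h (x + n))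
      (v := fun n : ℕ => c * 2 ^ lam * ((x + n) ^ (1 - lam) / (lam - 1)))
      (hh.comp (tendsto_atTop_add_const_left _ x tendsto_natCast_atTop_atTop))
      (fun n => by positivity)
      (fun n => by
        push_cast
        rw [← add_assoc, ← mul_sub, ← sub_div]
        exact hstep _ (hx.trans (by simp)))
    simpa using this
  calc ‖x ^ (lam - 1) * h x‖ = x ^ (lam - 1) * |h x| := by
        rw [norm_mul, norm_of_nonneg (by positivity), Real.norm_eq_abs]
    _ ≤ x ^ (lam - 1) * (c * 2 ^ lam * (x ^ (1 - lam) / (lam - 1))) := by gcongr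
    _ = c * 2 ^ lam / (lam - 1) := by
        rw [mul_left_comm, rpow_sub_one_mul_rpow_one_sub_div (by linarith)]; ring
    _ < ε := by
        rw [hc_def, rpow_add_one (by norm_num)]
        field_simp
        linarith

end RpowTail

theorem stmt_0 (f : ℝ → ℝ) (lam l : ℝ) (hlam : 1 < lam)
    (hf : Tendsto f atTop (nhds 0))
    (h : Tendsto (fun x : ℝ => x ^ lam * (f x - f (x + 1))) atTop (nhds l)) :
    Tendsto (fun x : ℝ => x ^ (lam - 1) * f x) atTop (nhds (l / (lam - 1))) := by
  set G : ℝ → ℝ := fun x => x ^ (1 - lam) / (lam - 1) with hG_def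
  have hG : Tendsto G atTop (𝓝 0) := by
    have := (tendsto_rpow_neg_atTop (by linarith : 0 < lam - 1)).div_const (lam - 1)
    rwa [neg_sub, zero_div] at this
  have hcorr := tendsto_rpow_sub_one_mul_of_tendsto_rpow_mul_sub (h := fun x => f x - l * G x) hlam
    (by simpa using hf.sub (hG.const_mul l))
    (by
      have := h.sub ((tendsto_rpow_mul_sub_rpow_succ_div hlam).const_mul l)
      rw [mul_one, sub_self] at this
      refine this.congr fun x => ?_
      simp only [hG_def]
      ring)
  have hlim := hcorr.add_const (l / (lam - 1))
  rw [zero_add] at hlim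
  refine hlim.congr' ?_
  filter_upwards [eventually_gt_atTop 0] with x hx
  rw [mul_sub, mul_left_comm, rpow_sub_one_mul_rpow_one_sub_div hx]
  ring
end

section
/- For all real a, b and as x → ∞, lim_{x→∞} x^(b-a) · Γ(x+a)/Γ(x+b) = 1. -/
open Filter Real

open Topology

/-!
Log-convexity of `Γ` between `x` and `x + 1`, together with `Γ(x + 1) = x Γ(x)`, gives
Wendel's inequality `Γ(x + s) ≤ Γ(x) x ^ s` for `0 ≤ s ≤ 1`; applied once at `x` and once at
`x + s` with exponent `1 - s`, it squeezes `x ^ (-s) Γ(x + s) / Γ(x)` between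
`(1 + s / x) ^ (s - 1)` and `1`, so this ratio tends to `1`. The functional equation multiplies
the ratio by `1 + c / x → 1` when `c` is replaced by `c + 1`, which extends the limit to all real
`c`, and the theorem is the quotient of the limits for `c = a` and `c = b`.
-/

theorem Filter.tendsto_one_iff_of_eventuallyEq_mul {α G₀ : Type*} [GroupWithZero G₀]
    [TopologicalSpace G₀] [ContinuousMul G₀] [ContinuousInv₀ G₀] [T1Space G₀] {l : Filter α}
    {f g h : α → G₀} (hg : Tendsto g l (𝓝 1)) (hf : f =ᶠ[l] g * h) :
    Tendsto f l (𝓝 1) ↔ Tendsto h l (𝓝 1) := by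
  constructor
  · intro hf1
    have hfg : h =ᶠ[l] g⁻¹ * f := by
      filter_upwards [hf, hg.eventually_ne one_ne_zero] with x hx hgx
      simp [hx, inv_mul_cancel_left₀ hgx]
    simpa using ((hg.inv₀ one_ne_zero).mul hf1).congr' hfg.symm
  · intro hh1
    simpa using (hg.mul hh1).congr' hf.symm

namespace Real

theorem Gamma_add_le_Gamma_mul_rpow {x s : ℝ} (hx : 0 < x) (hs₀ : 0 ≤ s) (hs₁ : s ≤ 1) :
    Gamma (x + s) ≤ Gamma x * x ^ s := by
  have hΓ := Gamma_pos_of_pos hx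
  have hconv := convexOn_log_Gamma.2 (Set.mem_Ioi.2 hx)
    (Set.mem_Ioi.2 (by linarith : (0 : ℝ) < x + 1)) (by linarith : (0 : ℝ) ≤ 1 - s) hs₀
    (by ring : 1 - s + s = 1)
  rw [smul_eq_mul, smul_eq_mul, show (1 - s) * x + s * (x + 1) = x + s by ring] at hconv
  have hxs := rpow_pos_of_pos hx s
  rw [← log_le_log_iff (Gamma_pos_of_pos (by linarith)) (by positivity), log_mul hΓ.ne' hxs.ne',
    log_rpow hx]
  simp only [Function.comp, smul_eq_mul, Gamma_add_one hx.ne', log_mul hx.ne' hΓ.ne'] at hconv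
  linarith

end Real

noncomputable def gammaRatio (c x : ℝ) : ℝ := x ^ (-c) * (Gamma (x + c) / Gamma x)

theorem gammaRatio_add_one {c x : ℝ} (hx : 0 < x) (hxc : x + c ≠ 0) :
    gammaRatio (c + 1) x = (1 + c / x) * gammaRatio c x := by
  have hΓ := (Gamma_pos_of_pos hx).ne'
  rw [gammaRatio, gammaRatio, ← add_assoc, Gamma_add_one hxc, neg_add, rpow_add hx, rpow_neg_one]
  field_simp

theorem tendsto_gammaRatio_add_one_iff (c : ℝ) :
    Tendsto (gammaRatio (c + 1)) atTop (𝓝 1) ↔ Tendsto (gammaRatio c) atTop (𝓝 1) := by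
  refine Filter.tendsto_one_iff_of_eventuallyEq_mul (g := fun x => 1 + c / x) ?_ ?_
  · simpa using (tendsto_const_nhds.div_atTop tendsto_id).const_add (1 : ℝ)
  · filter_upwards [eventually_gt_atTop 0, eventually_gt_atTop (-c)] with x hx hxc
    exact gammaRatio_add_one hx (by linarith)

theorem gammaRatio_le_one {s x : ℝ} (hx : 0 < x) (hs₀ : 0 ≤ s) (hs₁ : s ≤ 1) :
    gammaRatio s x ≤ 1 := by
  have hΓ := Gamma_pos_of_pos hx
  calc gammaRatio s x ≤ x ^ (-s) * x ^ s := by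
        rw [gammaRatio]
        gcongr
        rw [div_le_iff₀ hΓ, mul_comm (x ^ s)]
        exact Gamma_add_le_Gamma_mul_rpow hx hs₀ hs₁
    _ = 1 := by rw [← rpow_add hx, neg_add_cancel, rpow_zero]

theorem one_add_div_rpow_le_gammaRatio {s x : ℝ} (hx : 0 < x) (hs₀ : 0 ≤ s) (hs₁ : s ≤ 1) :
    (1 + s / x) ^ (s - 1) ≤ gammaRatio s x := by
  have hxs : 0 < x + s := by linarith
  have hΓ := Gamma_pos_of_pos hx
  have key := Gamma_add_le_Gamma_mul_rpow hxs (by linarith : 0 ≤ 1 - s) (by linarith)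
  rw [show x + s + (1 - s) = x + 1 by ring, Gamma_add_one hx.ne'] at key
  have key' : x * (x + s) ^ (s - 1) * Gamma x ≤ Gamma (x + s) := by
    calc x * (x + s) ^ (s - 1) * Gamma x = x * Gamma x * (x + s) ^ (s - 1) := by ring
      _ ≤ Gamma (x + s) * (x + s) ^ (1 - s) * (x + s) ^ (s - 1) := by gcongr
      _ = Gamma (x + s) := by rw [mul_assoc, ← rpow_add hxs, sub_add_sub_cancel', sub_self,
            rpow_zero, mul_one]
  calc (1 + s / x) ^ (s - 1) = x ^ (-s) * (x * (x + s) ^ (s - 1)) := by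
        rw [show 1 + s / x = (x + s) / x by field_simp, div_rpow hxs.le hx.le, rpow_sub hx,
          rpow_neg hx.le, rpow_one]
        field_simp
    _ ≤ gammaRatio s x := by
        rw [gammaRatio]
        gcongr
        rwa [le_div_iff₀ hΓ]

theorem tendsto_gammaRatio_of_mem_Icc {s : ℝ} (hs₀ : 0 ≤ s) (hs₁ : s ≤ 1) :
    Tendsto (gammaRatio s) atTop (𝓝 1) := by
  have hlow : Tendsto (fun x : ℝ => (1 + s / x) ^ (s - 1)) atTop (𝓝 1) := by
    simpa using ((tendsto_const_nhds.div_atTop tendsto_id).const_add (1 : ℝ)).rpow_const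
      (Or.inl (by norm_num))
  refine tendsto_of_tendsto_of_tendsto_of_le_of_le' hlow tendsto_const_nhds ?_ ?_
  · filter_upwards [eventually_gt_atTop 0] with x hx
    exact one_add_div_rpow_le_gammaRatio hx hs₀ hs₁
  · filter_upwards [eventually_gt_atTop 0] with x hx
    exact gammaRatio_le_one hx hs₀ hs₁

theorem tendsto_gammaRatio (c : ℝ) : Tendsto (gammaRatio c) atTop (𝓝 1) := by
  have shift : ∀ n : ℤ, Tendsto (gammaRatio (Int.fract c + n)) atTop (𝓝 1) := by
    intro n
    induction n using Int.induction_on with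
    | zero =>
      simpa using tendsto_gammaRatio_of_mem_Icc (Int.fract_nonneg c) (Int.fract_lt_one c).le
    | succ k ih =>
      rwa [Int.cast_add, Int.cast_one, ← add_assoc, tendsto_gammaRatio_add_one_iff]
    | pred k ih =>
      rwa [← tendsto_gammaRatio_add_one_iff, Int.cast_sub, Int.cast_one, ← add_sub_assoc,
        sub_add_cancel]
  simpa using shift ⌊c⌋

theorem stmt_2 (a b : ℝ) :
    Tendsto (fun x : ℝ => x ^ (b - a) * (Real.Gamma (x + a) / Real.Gamma (x + b)))
      atTop (nhds 1) := by
  have h := (tendsto_gammaRatio a).div (tendsto_gammaRatio b) one_ne_zero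
  rw [div_one] at h
  refine h.congr' ?_
  filter_upwards [eventually_gt_atTop 0] with x hx
  have hΓ := (Gamma_pos_of_pos hx).ne'
  simp only [Pi.div_apply, gammaRatio]
  rw [rpow_sub hx, rpow_neg hx.le, rpow_neg hx.le]
  field_simp
end

section
/- Define E₀(x) by 8π³(x/e)^{6x}·Γ(x+1)^{-6} = exp(E₀(x))/Φ₀(x), where Φ₀(x) = x³ + x²/2 + x/8 + 1/240. Then lim_{x→∞} x⁴·E₀(x) = 11/1920. -/
/-!
Binet's function `μ(x) = ∑ₙ ((x + n + 1/2) log (1 + 1/(x + n)) - 1)` (Gudermann's series)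
is convex, satisfies `μ(x) = g(x) + μ(x + 1)` with `g` its first term, and
`μ(1) = 1 - log (2π) / 2` by Stirling's formula for `n!`; Bohr–Mollerup then gives
`log Γ(x) = (x - 1/2) log x - x + log (2π) / 2 + μ(x)`.
Each term `g(t)` agrees with `h(t) - h(t + 1)`, `h(t) = 1/(12t) - 1/(360t³)`, up to
`O(t⁻⁶)`, so `μ(x) = h(x) + O(x⁻⁵)`. Hence `E₀(x) = log (1 + u) - 6 μ(x)` with
`u = Φ₀(x)/x³ - 1`, and the fourth-order expansion of `log (1 + u)` leaves
`11/(1920 x⁴) + O(x⁻⁵)`.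
-/

open Filter Real Set Topology

lemma hasSum_sub_add_one_of_tendsto_zero {f : ℝ → ℝ} {x : ℝ}
    (hf : ∀ n : ℕ, f (x + n + 1) ≤ f (x + n)) (hlim : Tendsto f atTop (𝓝 0)) :
    HasSum (fun n : ℕ => f (x + n) - f (x + n + 1)) (f x) := by
  have hcast (n : ℕ) : x + ↑(n + 1) = x + n + 1 := by push_cast; ring
  rw [hasSum_iff_tendsto_nat_of_nonneg fun n => sub_nonneg.2 (hf n)]
  simp_rw [← hcast, Finset.sum_range_sub' (fun n : ℕ => f (x + n)), Nat.cast_zero, add_zero]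
  simpa using tendsto_const_nhds.sub
    (hlim.comp (tendsto_atTop_add_const_left _ x tendsto_natCast_atTop_atTop))

lemma abs_log_one_add_sub_sum_le {x : ℝ} (hx : |x| ≤ 1 / 2) (n : ℕ) :
    |log (1 + x) - ∑ i ∈ Finset.range n, (-1) ^ i * x ^ (i + 1) / (i + 1)|
      ≤ 2 * |x| ^ (n + 1) := by
  have h := abs_log_sub_add_sum_range_le (x := -x) (by rw [abs_neg]; linarith) n
  have hsum : ∑ i ∈ Finset.range n, (-x) ^ (i + 1) / (i + 1)
      = -∑ i ∈ Finset.range n, (-1) ^ i * x ^ (i + 1) / (i + 1) := by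
    rw [← Finset.sum_neg_distrib]
    refine Finset.sum_congr rfl fun i _ => ?_
    rw [neg_pow, pow_succ]
    ring
  rw [hsum, sub_neg_eq_add, abs_neg, neg_add_eq_sub] at h
  refine h.trans ?_
  rw [div_le_iff₀ (by linarith), mul_comm]
  nlinarith [pow_nonneg (abs_nonneg x) (n + 1)]

lemma ConvexOn.tsum {ι E : Type*} [AddCommMonoid E] [Module ℝ E] {s : Set E}
    {f : ι → E → ℝ} (hs : Convex ℝ s) (hf : ∀ i, ConvexOn ℝ s (f i))
    (hsum : ∀ x ∈ s, Summable fun i => f i x) : ConvexOn ℝ s fun x => ∑' i, f i x := by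
  refine ⟨hs, fun x hx y hy a b ha hb hab => ?_⟩
  simp only [smul_eq_mul]
  rw [← tsum_mul_left, ← tsum_mul_left, ← ((hsum x hx).mul_left a).tsum_add
    ((hsum y hy).mul_left b)]
  exact Summable.tsum_le_tsum (fun i => (hf i).2 hx hy ha hb hab)
    (hsum _ (hs hx hy ha hb hab)) (((hsum x hx).mul_left a).add ((hsum y hy).mul_left b))

lemma log_Gamma_eq_sub_of_convexOn {f : ℝ → ℝ} (hf_conv : ConvexOn ℝ (Ioi 0) f)
    (hf_feq : ∀ {y : ℝ}, 0 < y → f (y + 1) = f y + log y) {x : ℝ} (hx : 0 < x) :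
    log (Gamma x) = f x - f 1 :=
  tendsto_nhds_unique (BohrMollerup.tendsto_log_gamma hx)
    (BohrMollerup.tendsto_logGammaSeq hf_conv hf_feq hx)

lemma five_div_pow_six_le_inv_pow_five_sub {t : ℝ} (ht : 1 < t) :
    5 / t ^ 6 ≤ 1 / (t - 1) ^ 5 - 1 / t ^ 5 := by
  have ht0 : 0 < t := by linarith
  have ht1 : 0 < t - 1 := by linarith
  rw [div_sub_div _ _ (by positivity) (by positivity), div_le_div_iff₀ (by positivity)
    (by positivity)]
  have hdiff : 5 * (t - 1) ^ 4 ≤ t ^ 5 - (t - 1) ^ 5 := by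
    nlinarith [pow_pos ht1 2, pow_pos ht1 3, pow_pos ht1 4]
  nlinarith [mul_le_mul_of_nonneg_right hdiff (by positivity : 0 ≤ t ^ 6),
    mul_pos (pow_pos ht1 4) (pow_pos ht0 5)]

noncomputable def gudermannTerm (t : ℝ) : ℝ := (t + 1 / 2) * (log (t + 1) - log t) - 1

noncomputable def binetApprox (t : ℝ) : ℝ := 1 / (12 * t) - 1 / (360 * t ^ 3)

noncomputable def binet (x : ℝ) : ℝ := ∑' n : ℕ, gudermannTerm (x + n)

lemma convexOn_gudermannTerm : ConvexOn ℝ (Ioi 0) gudermannTerm := by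
  have hg' : ∀ t ∈ Ioi (0 : ℝ), HasDerivAt gudermannTerm
      (log (t + 1) - log t + (t + 1 / 2) * ((t + 1)⁻¹ - t⁻¹)) t := fun t (ht : 0 < t) => by
    have := (((hasDerivAt_id t).add_const (1 / 2)).mul
      ((((hasDerivAt_id t).add_const 1).log (by positivity)).sub
        (hasDerivAt_log ht.ne'))).sub_const 1
    refine this.congr_deriv ?_
    simp only [id_eq, Pi.sub_apply, one_div]
    ring
  have hg'' : ∀ t ∈ Ioi (0 : ℝ), HasDerivAt
      (fun t => log (t + 1) - log t + (t + 1 / 2) * ((t + 1)⁻¹ - t⁻¹))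
      (1 / (2 * t ^ 2 * (t + 1) ^ 2)) t := fun t (ht : 0 < t) => by
    have h1 : t + 1 ≠ 0 := by positivity
    have := ((((hasDerivAt_id t).add_const 1).log h1).sub (hasDerivAt_log ht.ne')).add
      (((hasDerivAt_id t).add_const (1 / 2)).mul
        ((((hasDerivAt_id t).add_const 1).inv h1).sub ((hasDerivAt_id t).inv ht.ne')))
    refine this.congr_deriv ?_
    simp only [id_eq, Pi.sub_apply, Pi.inv_apply]
    field_simp
    ring
  refine convexOn_of_hasDerivWithinAt2_nonneg (convex_Ioi 0)
    (f' := fun t => log (t + 1) - log t + (t + 1 / 2) * ((t + 1)⁻¹ - t⁻¹))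
    (f'' := fun t => 1 / (2 * t ^ 2 * (t + 1) ^ 2))
    (fun t ht => (hg' t ht).continuousAt.continuousWithinAt) ?_ ?_ ?_ <;> rw [interior_Ioi]
  · exact fun t ht => (hg' t ht).hasDerivWithinAt
  · exact fun t ht => (hg'' t ht).hasDerivWithinAt
  · exact fun t _ => by positivity

lemma convexOn_sub_one_half_mul_log_sub_self :
    ConvexOn ℝ (Ioi 0) fun t => (t - 1 / 2) * log t - t := by
  have h := ((convexOn_mul_log.subset Ioi_subset_Ici_self (convex_Ioi 0)).add
    (strictConcaveOn_log_Ioi.concaveOn.neg.smul (by norm_num : (0 : ℝ) ≤ 1 / 2))).sub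
    (concaveOn_id (convex_Ioi 0))
  refine h.congr fun t _ => ?_
  simp only [Pi.add_apply, Pi.neg_apply, Pi.sub_apply, smul_eq_mul, id]
  ring

lemma tendsto_binetApprox_atTop : Tendsto binetApprox atTop (𝓝 0) := by
  have h (c : ℝ) (hc : 0 < c) (k : ℕ) (hk : k ≠ 0) :
      Tendsto (fun t : ℝ => 1 / (c * t ^ k)) atTop (𝓝 0) :=
    tendsto_const_nhds.div_atTop ((tendsto_pow_atTop hk).const_mul_atTop hc)
  show Tendsto (fun t => 1 / (12 * t) - 1 / (360 * t ^ 3)) atTop (𝓝 0)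
  simpa using (h 12 (by norm_num) 1 one_ne_zero).sub (h 360 (by norm_num) 3 three_ne_zero)

lemma binetApprox_add_one_le {t : ℝ} (ht : 1 ≤ t) : binetApprox (t + 1) ≤ binetApprox t := by
  have ht0 : 0 < t := by linarith
  have key : binetApprox t - binetApprox (t + 1)
      = (30 * t ^ 4 + 60 * t ^ 3 + 27 * t ^ 2 - 3 * t - 1) / (360 * t ^ 3 * (t + 1) ^ 3) := by
    unfold binetApprox
    field_simp
    ring
  have : 0 ≤ 30 * t ^ 4 + 60 * t ^ 3 + 27 * t ^ 2 - 3 * t - 1 := by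
    nlinarith [pow_pos ht0 2, pow_pos ht0 3, pow_pos ht0 4]
  have : 0 ≤ binetApprox t - binetApprox (t + 1) := by rw [key]; positivity
  linarith

lemma abs_gudermannTerm_sub_le {t : ℝ} (ht : 2 ≤ t) :
    |gudermannTerm t - (binetApprox t - binetApprox (t + 1))| ≤ 1 / (t - 1) ^ 5 - 1 / t ^ 5 := by
  have ht0 : 0 < t := by linarith
  set L := ∑ i ∈ Finset.range 6, (-1) ^ i * (1 / t) ^ (i + 1) / (i + 1)
  have hlog : log (t + 1) - log t = log (1 + 1 / t) := by
    rw [← log_div (by positivity) ht0.ne', add_div, div_self ht0.ne']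
  have htaylor : |log (1 + 1 / t) - L| ≤ 2 / t ^ 7 := by
    have habs : |1 / t| = 1 / t := abs_of_pos (by positivity)
    have h := abs_log_one_add_sub_sum_le (x := 1 / t)
      (by rw [habs, div_le_div_iff₀ ht0 (by norm_num)]; linarith) 6
    rw [habs, one_div_pow] at h
    exact h.trans_eq (by ring)
  have hpoly : (t + 1 / 2) * L - 1 - (binetApprox t - binetApprox (t + 1))
      = -((50 * t ^ 3 + 135 * t ^ 2 + 114 * t + 30) / (360 * t ^ 6 * (t + 1) ^ 3)) := by
    simp only [L, binetApprox, Finset.sum_range_succ, Finset.sum_range_zero]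
    norm_num
    field_simp
    ring
  have hsplit : gudermannTerm t - (binetApprox t - binetApprox (t + 1))
      = (t + 1 / 2) * (log (1 + 1 / t) - L)
        + ((t + 1 / 2) * L - 1 - (binetApprox t - binetApprox (t + 1))) := by
    rw [gudermannTerm, hlog]
    ring
  have hmain : |(t + 1 / 2) * (log (1 + 1 / t) - L)| ≤ 3 / t ^ 6 := by
    rw [abs_mul, abs_of_pos (by positivity : 0 < t + 1 / 2)]
    calc (t + 1 / 2) * |log (1 + 1 / t) - L| ≤ (t + 1 / 2) * (2 / t ^ 7) := by gcongr
      _ ≤ 3 / t ^ 6 := by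
        rw [mul_div_assoc', div_le_div_iff₀ (by positivity) (by positivity)]
        nlinarith [pow_pos ht0 6]
  have hrest : |(t + 1 / 2) * L - 1 - (binetApprox t - binetApprox (t + 1))| ≤ 2 / t ^ 6 := by
    rw [hpoly, abs_neg, abs_of_pos (by positivity),
      div_le_div_iff₀ (by positivity) (by positivity)]
    nlinarith [pow_pos ht0 6, pow_pos ht0 7, pow_pos ht0 8, pow_pos ht0 9]
  calc |gudermannTerm t - (binetApprox t - binetApprox (t + 1))|
      ≤ 3 / t ^ 6 + 2 / t ^ 6 := hsplit ▸ (abs_add_le _ _).trans (add_le_add hmain hrest)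
    _ = 5 / t ^ 6 := by ring
    _ ≤ 1 / (t - 1) ^ 5 - 1 / t ^ 5 := five_div_pow_six_le_inv_pow_five_sub (by linarith)

lemma hasSum_binetApprox_sub {x : ℝ} (hx : 1 ≤ x) :
    HasSum (fun n : ℕ => binetApprox (x + n) - binetApprox (x + n + 1)) (binetApprox x) :=
  hasSum_sub_add_one_of_tendsto_zero
    (fun n => binetApprox_add_one_le (by linarith [n.cast_nonneg (α := ℝ)]))
    tendsto_binetApprox_atTop

lemma hasSum_inv_pow_five_sub {x : ℝ} (hx : 1 < x) :
    HasSum (fun n : ℕ => 1 / (x + n - 1) ^ 5 - 1 / (x + n) ^ 5) (1 / (x - 1) ^ 5) := by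
  have h := hasSum_sub_add_one_of_tendsto_zero (f := fun t => 1 / (t - 1) ^ 5) (x := x)
    (fun n => by
      have : 0 < x + n - 1 := by linarith [n.cast_nonneg (α := ℝ)]
      simp only [add_sub_cancel_right]
      gcongr
      linarith)
    (tendsto_const_nhds.div_atTop
      ((tendsto_pow_atTop (by norm_num)).comp (tendsto_atTop_add_const_right _ (-1) tendsto_id)))
  simpa only [add_sub_cancel_right] using h

lemma summable_gudermannTerm {x : ℝ} (hx : 0 < x) :
    Summable fun n : ℕ => gudermannTerm (x + n) := by
  rw [← summable_nat_add_iff 2]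
  have herr : Summable fun n : ℕ => gudermannTerm (x + 2 + n)
      - (binetApprox (x + 2 + n) - binetApprox (x + 2 + n + 1)) :=
    Summable.of_norm_bounded (hasSum_inv_pow_five_sub (by linarith)).summable fun n =>
      abs_gudermannTerm_sub_le (by linarith [n.cast_nonneg (α := ℝ)])
  refine (herr.add (hasSum_binetApprox_sub (x := x + 2) (by linarith)).summable).congr fun n => ?_
  push_cast
  ring_nf

lemma binet_eq_add_binet_add_one {x : ℝ} (hx : 0 < x) :
    binet x = gudermannTerm x + binet (x + 1) := by
  rw [binet, (summable_gudermannTerm hx).tsum_eq_zero_add, binet]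
  push_cast
  simp_rw [add_zero, add_assoc, add_comm (1 : ℝ)]

lemma convexOn_binet : ConvexOn ℝ (Ioi 0) binet :=
  ConvexOn.tsum (convex_Ioi 0)
    (fun n => (convexOn_gudermannTerm.translate_left (n : ℝ)).subset
      (fun t (ht : 0 < t) => show (0 : ℝ) < n + t by positivity) (convex_Ioi 0))
    fun _ hx => summable_gudermannTerm hx

lemma abs_binet_sub_binetApprox_le {x : ℝ} (hx : 2 ≤ x) :
    |binet x - binetApprox x| ≤ 1 / (x - 1) ^ 5 := by
  have h := ((summable_gudermannTerm (by linarith)).hasSum.sub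
    (hasSum_binetApprox_sub (by linarith))).tsum_eq
  rw [binet, ← h, ← Real.norm_eq_abs]
  refine tsum_of_norm_bounded (hasSum_inv_pow_five_sub (x := x) (by linarith)) fun n => ?_
  exact abs_gudermannTerm_sub_le (by linarith [n.cast_nonneg (α := ℝ)])

lemma gudermannTerm_natCast_add_one (n : ℕ) :
    gudermannTerm (n + 1)
      = log (Stirling.stirlingSeq (n + 1)) - log (Stirling.stirlingSeq (n + 2)) := by
  rw [Stirling.log_stirlingSeq_formula, Stirling.log_stirlingSeq_formula,
    Nat.factorial_succ (n + 1), gudermannTerm]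
  push_cast
  rw [show (n : ℝ) + 2 = n + 1 + 1 by ring]
  simp (disch := positivity) only [log_mul, log_div, log_exp]
  ring

lemma binet_one : binet 1 = 1 - log (2 * π) / 2 := by
  have hpartial (N : ℕ) : ∑ n ∈ Finset.range N, gudermannTerm (1 + n)
      = log (Stirling.stirlingSeq 1) - log (Stirling.stirlingSeq (N + 1)) := by
    simp_rw [add_comm (1 : ℝ), gudermannTerm_natCast_add_one]
    exact Finset.sum_range_sub' (fun n => log (Stirling.stirlingSeq (n + 1))) N
  have hlim : Tendsto (fun N : ℕ => ∑ n ∈ Finset.range N, gudermannTerm (1 + n)) atTop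
      (𝓝 (log (Stirling.stirlingSeq 1) - log √π)) := by
    simp_rw [hpartial]
    exact tendsto_const_nhds.sub (((continuousAt_log (by positivity)).tendsto.comp
      Stirling.tendsto_stirlingSeq_sqrt_pi).comp (tendsto_add_atTop_nat 1))
  rw [binet, tendsto_nhds_unique (summable_gudermannTerm one_pos).hasSum.tendsto_sum_nat hlim,
    Stirling.stirlingSeq_one, log_div (exp_ne_zero 1) (by positivity), log_exp,
    log_sqrt (by positivity), log_sqrt pi_pos.le, log_mul two_ne_zero pi_pos.ne']
  ring

lemma log_Gamma_eq_add_binet {x : ℝ} (hx : 0 < x) :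
    log (Gamma x) = (x - 1 / 2) * log x - x + log (2 * π) / 2 + binet x := by
  have hfeq {y : ℝ} (hy : 0 < y) : (y + 1 - 1 / 2) * log (y + 1) - (y + 1) + binet (y + 1)
      = (y - 1 / 2) * log y - y + binet y + log y := by
    rw [binet_eq_add_binet_add_one hy, gudermannTerm]
    ring
  rw [log_Gamma_eq_sub_of_convexOn (convexOn_sub_one_half_mul_log_sub_self.add convexOn_binet)
    hfeq hx]
  simp only [Pi.add_apply, log_one, mul_zero, binet_one]
  ring

noncomputable def phiCorrection (x : ℝ) : ℝ := 1 / (2 * x) + 1 / (8 * x ^ 2) + 1 / (240 * x ^ 3)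

lemma log_stirling_ratio_eq {x : ℝ} (hx : 0 < x) :
    log (8 * π ^ 3 * (x / exp 1) ^ (6 * x) / Gamma (x + 1) ^ 6) +
      log (x ^ 3 + x ^ 2 / 2 + x / 8 + 1 / 240) = log (1 + phiCorrection x) - 6 * binet x := by
  have hphi : x ^ 3 + x ^ 2 / 2 + x / 8 + 1 / 240 = x ^ 3 * (1 + phiCorrection x) := by
    unfold phiCorrection
    field_simp
    ring
  have hΓ : log (Gamma (x + 1)) = log x + log (Gamma x) := by
    rw [Gamma_add_one hx.ne', log_mul hx.ne' (Gamma_pos_of_pos hx).ne']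
  have hu : 0 < 1 + phiCorrection x := by unfold phiCorrection; positivity
  have hΓpos : 0 < Gamma (x + 1) := Gamma_pos_of_pos (by linarith)
  rw [hphi, log_div (by positivity) (by positivity), log_mul (by positivity) (by positivity),
    log_rpow (by positivity), log_div hx.ne' (exp_ne_zero 1), log_exp, log_pow, hΓ,
    log_Gamma_eq_add_binet hx, log_mul (by positivity) hu.ne', log_pow,
    show (8 : ℝ) * π ^ 3 = (2 * π) ^ 3 by ring, log_pow]
  push_cast
  ring

lemma phiCorrection_pos {x : ℝ} (hx : 0 < x) : 0 < phiCorrection x := by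
  unfold phiCorrection; positivity

lemma phiCorrection_le {x : ℝ} (hx : 1 ≤ x) : phiCorrection x ≤ 1 / x := by
  have hx0 : 0 < x := by linarith
  have key : 1 / x - phiCorrection x = (120 * x ^ 2 - 30 * x - 1) / (240 * x ^ 3) := by
    unfold phiCorrection
    field_simp
    ring
  have : 0 ≤ 120 * x ^ 2 - 30 * x - 1 := by nlinarith
  have : 0 ≤ 1 / x - phiCorrection x := by rw [key]; positivity
  linarith

lemma tendsto_pow_four_mul_log_one_add_phiCorrection_sub :
    Tendsto (fun x => x ^ 4 * (log (1 + phiCorrection x) -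
      ∑ i ∈ Finset.range 4, (-1) ^ i * phiCorrection x ^ (i + 1) / (i + 1)))
      atTop (𝓝 0) := by
  refine squeeze_zero_norm' (a := fun x => 2 / x) ?_
    (tendsto_const_nhds.div_atTop tendsto_id)
  filter_upwards [eventually_ge_atTop 2] with x hx
  have hx0 : 0 < x := by linarith
  have hu : |phiCorrection x| ≤ 1 / x := by
    rw [abs_of_pos (phiCorrection_pos hx0)]; exact phiCorrection_le (by linarith)
  have hu' : |phiCorrection x| ≤ 1 / 2 :=
    hu.trans (by rw [div_le_div_iff₀ hx0 (by norm_num)]; linarith)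
  rw [norm_mul, Real.norm_eq_abs, abs_of_pos (by positivity), Real.norm_eq_abs]
  calc x ^ 4 * |log (1 + phiCorrection x) -
        ∑ i ∈ Finset.range 4, (-1) ^ i * phiCorrection x ^ (i + 1) / (i + 1)|
      ≤ x ^ 4 * (2 * (1 / x) ^ 5) := by
        gcongr
        exact (abs_log_one_add_sub_sum_le hu' 4).trans (by gcongr)
    _ = 2 / x := by field_simp

lemma tendsto_pow_four_mul_binet_sub_binetApprox :
    Tendsto (fun x => x ^ 4 * (binet x - binetApprox x)) atTop (𝓝 0) := by
  have hsub : Tendsto (fun x : ℝ => x - 1) atTop atTop := by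
    simpa [sub_eq_add_neg] using tendsto_atTop_add_const_right atTop (-1 : ℝ) tendsto_id
  refine squeeze_zero_norm' (a := fun x => 16 / (x - 1)) ?_ (tendsto_const_nhds.div_atTop hsub)
  filter_upwards [eventually_ge_atTop 2] with x hx
  have hx1 : 0 < x - 1 := by linarith
  have hx4 : x ^ 4 ≤ 16 * (x - 1) ^ 4 := by
    calc x ^ 4 ≤ (2 * (x - 1)) ^ 4 := by gcongr; linarith
      _ = 16 * (x - 1) ^ 4 := by ring
  rw [norm_mul, Real.norm_eq_abs, abs_of_pos (by positivity), Real.norm_eq_abs]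
  calc x ^ 4 * |binet x - binetApprox x| ≤ 16 * (x - 1) ^ 4 * (1 / (x - 1) ^ 5) := by
        gcongr
        exact abs_binet_sub_binetApprox_le hx
    _ = 16 / (x - 1) := by field_simp

lemma tendsto_pow_four_mul_sum_sub_binetApprox :
    Tendsto (fun x => x ^ 4 * (∑ i ∈ Finset.range 4,
      (-1) ^ i * phiCorrection x ^ (i + 1) / (i + 1) - 6 * binetApprox x)) atTop
      (𝓝 (11 / 1920)) := by
  have hpoly := (show Continuous fun y : ℝ => 11 / 1920 - 7 / 960 * y - 601 / 115200 * y ^ 2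
      - 149 / 115200 * y ^ 3 - 601 / 3686400 * y ^ 4 - 943 / 82944000 * y ^ 5
      - 49 / 110592000 * y ^ 6 - 1 / 110592000 * y ^ 7 - 1 / 13271040000 * y ^ 8
      by fun_prop).tendsto 0
  norm_num at hpoly
  refine (hpoly.comp tendsto_inv_atTop_zero).congr' ?_
  filter_upwards [eventually_gt_atTop 0] with x hx
  simp only [Function.comp_apply, phiCorrection, binetApprox, Finset.sum_range_succ,
    Finset.sum_range_zero]
  norm_num
  field_simp
  ring

theorem stmt_9 (E₀ : ℝ → ℝ)
    (hE : ∀ x : ℝ, E₀ x =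
      Real.log (8 * Real.pi ^ 3 * (x / Real.exp 1) ^ (6 * x) / Real.Gamma (x + 1) ^ 6) +
        Real.log (x ^ 3 + x ^ 2 / 2 + x / 8 + 1 / 240)) :
    Tendsto (fun x : ℝ => x ^ 4 * E₀ x) atTop (nhds (11 / 1920)) := by
  have hlim := (tendsto_pow_four_mul_log_one_add_phiCorrection_sub.add
    tendsto_pow_four_mul_sum_sub_binetApprox).sub
    (tendsto_pow_four_mul_binet_sub_binetApprox.const_mul 6)
  rw [zero_add, mul_zero, sub_zero] at hlim
  refine hlim.congr' ?_
  filter_upwards [eventually_gt_atTop 0] with x hx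
  rw [hE, log_stirling_ratio_eq hx]
  ring
end

section
/- For every integer n ≥ 24, (1/√π)·(2πe/n)^{n/2}·(n³ + n² + n/2 + 1/30)^{-1/6} < Ω_n < (1/√π)·(2πe/n)^{n/2}·(n³ + n² + n/2 + 1/30)^{-1/6}·exp(11/(720(n-10)⁴)), where Ω_n = π^{n/2}/Γ(n/2+1). -/
/-!
Write `x = n / 2`, so that `Ω_n = π^x / Γ(x + 1)`. The two bounds say that the error
`F(x) = log R(x) - log Γ(x + 1)` of Ramanujan's approximation
`R(x) = √π (x / e)^x (8x³ + 4x² + x + 1/30)^{1/6}` satisfies `0 < F(x) < B(x)` with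
`B(x) = 11 / (11520 (x - 5)⁴)`. Both `F(x + k)` (by Stirling's formula along `x + ℕ`, which
follows from the integer case and log-convexity of `Γ`) and `B(x + k)` tend to `0` as `k → ∞`, so
it suffices to show `0 < F(y) - F(y + 1) < B(y) - B(y + 1)` for `y ≥ 12`. By
`Γ(y + 2) = (y + 1) Γ(y + 1)` the difference `F(y) - F(y + 1)` is elementary; replacing its
logarithms by Taylor polynomials with explicit remainders reduces both inequalities to the
positivity of two polynomials in `y - 12`, whose coefficients are all positive.
-/

open Real Filter Topology Finset

noncomputable def logOneAddTaylor (N : ℕ) (x : ℝ) : ℝ := -∑ i ∈ range N, (-x) ^ (i + 1) / (i + 1)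

theorem abs_log_one_add_sub_logOneAddTaylor_le {x : ℝ} (hx : |x| < 1) (N : ℕ) :
    |log (1 + x) - logOneAddTaylor N x| ≤ |x| ^ (N + 1) / (1 - |x|) := by
  have h := abs_log_sub_add_sum_range_le (x := -x) (by rwa [abs_neg]) N
  rw [abs_neg, sub_neg_eq_add] at h
  rwa [logOneAddTaylor, sub_neg_eq_add, add_comm]

theorem logOneAddTaylor_five (x : ℝ) :
    logOneAddTaylor 5 x = x - x ^ 2 / 2 + x ^ 3 / 3 - x ^ 4 / 4 + x ^ 5 / 5 := by
  simp only [logOneAddTaylor, sum_range_succ, sum_range_zero]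
  norm_num
  ring

theorem logOneAddTaylor_eight (x : ℝ) :
    logOneAddTaylor 8 x =
      x - x ^ 2 / 2 + x ^ 3 / 3 - x ^ 4 / 4 + x ^ 5 / 5 - x ^ 6 / 6 + x ^ 7 / 7 - x ^ 8 / 8 := by
  simp only [logOneAddTaylor, sum_range_succ, sum_range_zero]
  norm_num
  ring

noncomputable def stirlingError (y : ℝ) : ℝ :=
  log (Gamma (y + 1)) - ((y + 1 / 2) * log y - y + log (2 * π) / 2)

theorem stirlingError_sub_stirlingError_add_one {y : ℝ} (hy : 0 < y) :
    stirlingError y - stirlingError (y + 1) = (y + 1 / 2) * log (1 + 1 / y) - 1 := by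
  have hΓ : 0 < Gamma (y + 1) := Gamma_pos_of_pos (by linarith)
  rw [stirlingError, stirlingError, Gamma_add_one (s := y + 1) (by linarith),
    log_mul (by linarith) hΓ.ne',
    show 1 + 1 / y = (y + 1) / y by field_simp, log_div (by linarith) hy.ne']
  ring

theorem stirlingError_natCast {m : ℕ} (hm : m ≠ 0) :
    stirlingError m = log (Stirling.stirlingSeq m) - log √π := by
  have hm0 : (0 : ℝ) < m := by positivity
  rw [stirlingError, Stirling.log_stirlingSeq_formula, Gamma_nat_eq_factorial,
    log_div hm0.ne' (exp_pos 1).ne', log_exp, log_sqrt pi_pos.le,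
    log_mul two_ne_zero hm0.ne', log_mul two_ne_zero pi_pos.ne']
  ring

theorem tendsto_stirlingError_natCast : Tendsto (fun m : ℕ => stirlingError m) atTop (𝓝 0) := by
  have h := ((continuousAt_log (sqrt_pos.mpr pi_pos).ne').tendsto.comp
    Stirling.tendsto_stirlingSeq_sqrt_pi).sub_const (log √π)
  rw [sub_self] at h
  refine h.congr' ?_
  filter_upwards [eventually_ne_atTop 0] with m hm
  exact (stirlingError_natCast hm).symm

theorem log_Gamma_add_one {y : ℝ} (hy : 0 < y) :
    (log ∘ Gamma) (y + 1) = (log ∘ Gamma) y + log y := by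
  simp only [Function.comp_apply]
  rw [Gamma_add_one hy.ne', log_mul hy.ne' (Gamma_pos_of_pos hy).ne', add_comm]

/-- Wendel's limit `Γ(m + a) / (Γ(m) m^a) → 1`, from log-convexity of `Γ`. -/
theorem tendsto_log_Gamma_natCast_add_sub {a : ℝ} (ha0 : 0 ≤ a) (ha1 : a ≤ 1) :
    Tendsto (fun m : ℕ => log (Gamma (m + a)) - log (Gamma m) - a * log m) atTop (𝓝 0) := by
  rcases ha0.eq_or_lt with rfl | ha0
  · simp
  have hlower :
      Tendsto (fun m : ℕ => -(a * (log ((m - 1 : ℕ) + 1) - log (m - 1 : ℕ)))) atTop (𝓝 0) := by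
    simpa using ((tendsto_log_nat_add_one_sub_log.const_mul a).comp (tendsto_sub_atTop_nat 1)).neg
  refine tendsto_of_tendsto_of_tendsto_of_le_of_le' hlower tendsto_const_nhds ?_ ?_
  · filter_upwards [eventually_ge_atTop 2] with m hm
    have h := BohrMollerup.f_add_nat_ge convexOn_log_Gamma log_Gamma_add_one hm ha0
    simp only [Function.comp_apply] at h
    rw [Nat.cast_sub (by omega), Nat.cast_one, sub_add_cancel]
    linarith
  · filter_upwards [eventually_ne_atTop 0] with m hm
    have h := BohrMollerup.f_add_nat_le convexOn_log_Gamma log_Gamma_add_one hm ha0 ha1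
    simp only [Function.comp_apply] at h
    linarith

theorem tendsto_stirlingError_natCast_add {a : ℝ} (ha0 : 0 ≤ a) (ha1 : a ≤ 1) :
    Tendsto (fun m : ℕ => stirlingError (m + a)) atTop (𝓝 0) := by
  -- For `m ≠ 0`, `stirlingError (m + a) - stirlingError m` is the Wendel term at `m + 1`, minus
  -- `(m + 1/2 + a) log (1 + a / m)`, plus `a log (1 + 1 / m) + a`; and `m log (1 + a / m) → a`.
  have hwendel := (tendsto_log_Gamma_natCast_add_sub ha0 ha1).comp (tendsto_add_atTop_nat 1)
  have hlog := (tendsto_log_comp_add_sub_log a).comp tendsto_natCast_atTop_atTop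
  have hmul := (tendsto_mul_log_one_add_div_atTop a).comp tendsto_natCast_atTop_atTop
  have h := ((((tendsto_stirlingError_natCast.add hwendel).sub hmul).sub
    (hlog.const_mul (1 / 2))).sub
      ((hlog.sub tendsto_log_nat_add_one_sub_log).const_mul a)).add_const a
  simp only [add_zero, mul_zero, sub_zero, zero_sub, neg_add_cancel] at h
  refine h.congr' ?_
  filter_upwards [eventually_ne_atTop 0] with m hm
  have hm0 : (0 : ℝ) < m := by positivity
  simp only [Function.comp_apply, stirlingError]
  push_cast
  rw [show 1 + a / m = (m + a) / m by field_simp, log_div (by positivity) hm0.ne']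
  ring_nf

theorem tendsto_stirlingError_add_natCast {x : ℝ} (hx : 0 ≤ x) :
    Tendsto (fun k : ℕ => stirlingError (x + k)) atTop (𝓝 0) := by
  have h := (tendsto_stirlingError_natCast_add (a := x - ⌊x⌋₊) (by linarith [Nat.floor_le hx])
    (by linarith [Nat.lt_floor_add_one x])).comp (tendsto_add_atTop_nat ⌊x⌋₊)
  refine h.congr fun k => ?_
  simp only [Function.comp_apply, Nat.cast_add]
  ring_nf

theorem abs_mul_log_one_add_inv_sub_le {y : ℝ} (hy : 12 ≤ y) :
    |(y + 1 / 2) * log (1 + 1 / y) - (y + 1 / 2) * logOneAddTaylor 8 (1 / y)| ≤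
      1 / (10 * y ^ 7) := by
  have hy0 : 0 < y := by linarith
  have hinv : |1 / y| = 1 / y := abs_of_pos (by positivity)
  have h := abs_log_one_add_sub_logOneAddTaylor_le (x := 1 / y)
    (by rw [hinv, div_lt_one hy0]; linarith) 8
  rw [hinv] at h
  rw [← mul_sub, abs_mul, abs_of_pos (by linarith : 0 < y + 1 / 2)]
  have hquad : 0 ≤ y ^ 2 - 11 * y - 5 := by nlinarith
  calc _ ≤ (y + 1 / 2) * ((1 / y) ^ (8 + 1) / (1 - 1 / y)) := by gcongr
    _ = (y + 1 / 2) / (y ^ 8 * (y - 1)) := by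
      have : y - 1 ≠ 0 := by linarith
      rw [one_div_pow]
      field_simp
    _ ≤ 1 / (10 * y ^ 7) := by
      rw [div_le_div_iff₀ (mul_pos (by positivity) (by linarith)) (by positivity)]
      nlinarith [mul_nonneg (pow_pos hy0 7).le hquad]

noncomputable def ramanujanTail (z : ℝ) : ℝ := 1 / (2 * z) + 1 / (8 * z ^ 2) + 1 / (240 * z ^ 3)

/-- Ramanujan's approximation `Γ(z + 1) ≈ √π (z / e)^z (8z³ + 4z² + z + 1/30)^(1/6)` is Stirling's
formula times `(1 + ramanujanTail z)^(1/6)`. -/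
noncomputable def ramanujanCorrection (z : ℝ) : ℝ := log (1 + ramanujanTail z) / 6

theorem ramanujanTail_pos {z : ℝ} (hz : 0 < z) : 0 < ramanujanTail z := by
  unfold ramanujanTail; positivity

theorem ramanujanTail_le {z : ℝ} (hz : 12 ≤ z) : ramanujanTail z ≤ 41 / (80 * z) := by
  have hz0 : 0 < z := by linarith
  rw [show ramanujanTail z = (120 * z ^ 2 + 30 * z + 1) / (240 * z ^ 3) by
    rw [ramanujanTail]; field_simp; ring, div_le_div_iff₀ (by positivity) (by positivity)]
  nlinarith [pow_pos hz0 2]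

theorem abs_ramanujanCorrection_sub_le {z : ℝ} (hz : 12 ≤ z) :
    |ramanujanCorrection z - logOneAddTaylor 5 (ramanujanTail z) / 6| ≤ 1 / (300 * z ^ 6) := by
  have hz0 : 0 < z := by linarith
  set v := ramanujanTail z
  have hv0 : 0 < v := ramanujanTail_pos hz0
  have hv : v ≤ 41 / (80 * z) := ramanujanTail_le hz
  have hv1 : v ≤ 41 / 960 :=
    hv.trans <| by rw [div_le_div_iff₀ (by positivity) (by norm_num)]; linarith
  have h := abs_log_one_add_sub_logOneAddTaylor_le (x := v) (by rw [abs_of_pos hv0]; linarith) 5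
  rw [abs_of_pos hv0] at h
  have htail : v ^ 6 / (1 - v) ≤ 1 / (50 * z ^ 6) :=
    calc v ^ 6 / (1 - v) ≤ (41 / (80 * z)) ^ 6 / (919 / 960) :=
          div_le_div₀ (by positivity) (pow_le_pow_left₀ hv0.le hv 6) (by norm_num) (by linarith)
      _ = 41 ^ 6 * 960 / (80 ^ 6 * 919) / z ^ 6 := by field_simp
      _ ≤ 1 / 50 / z ^ 6 := div_le_div_of_nonneg_right (by norm_num) (by positivity)
      _ = 1 / (50 * z ^ 6) := by field_simp
  rw [ramanujanCorrection, ← sub_div, abs_div, abs_of_pos (by norm_num : (0 : ℝ) < 6)]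
  calc _ ≤ 1 / (50 * z ^ 6) / 6 := by gcongr; exact h.trans htail
    _ = 1 / (300 * z ^ 6) := by field_simp; ring

theorem tendsto_ramanujanCorrection_atTop : Tendsto ramanujanCorrection atTop (𝓝 0) := by
  have hpow {k : ℕ} (c : ℝ) (hc : 0 < c) (hk : k ≠ 0) :
      Tendsto (fun z : ℝ => 1 / (c * z ^ k)) atTop (𝓝 0) :=
    tendsto_const_nhds.div_atTop ((tendsto_pow_atTop hk).const_mul_atTop hc)
  have htail : Tendsto ramanujanTail atTop (𝓝 0) := by
    unfold ramanujanTail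
    simpa only [pow_one, add_zero] using
      ((hpow 2 two_pos one_ne_zero).add (hpow 8 (by norm_num) two_ne_zero)).add
        (hpow 240 (by norm_num) three_ne_zero)
  have harg := htail.const_add 1
  rw [add_zero] at harg
  have h := ((continuousAt_log one_ne_zero).tendsto.comp harg).div_const 6
  rwa [log_one, zero_div] at h

noncomputable def ramanujanError (y : ℝ) : ℝ := ramanujanCorrection y - stirlingError y

noncomputable def ramanujanErrorBound (y : ℝ) : ℝ := 11 / (11520 * (y - 5) ^ 4)

theorem tendsto_ramanujanErrorBound_atTop : Tendsto ramanujanErrorBound atTop (𝓝 0) :=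
  tendsto_const_nhds.div_atTop <| ((tendsto_pow_atTop four_ne_zero).comp
    (tendsto_atTop_add_const_right atTop (-5) tendsto_id)).const_mul_atTop (by norm_num)

/-- The Taylor approximation of `ramanujanError y - ramanujanError (y + 1)`. -/
noncomputable def ramanujanStepApprox (y : ℝ) : ℝ :=
  logOneAddTaylor 5 (ramanujanTail y) / 6 - logOneAddTaylor 5 (ramanujanTail (y + 1)) / 6
    - ((y + 1 / 2) * logOneAddTaylor 8 (1 / y) - 1)

/-- The sum of the three Taylor remainder bounds incurred by `ramanujanStepApprox`. -/
noncomputable def ramanujanStepTolerance (y : ℝ) : ℝ :=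
  1 / (300 * y ^ 6) + 1 / (300 * (y + 1) ^ 6) + 1 / (10 * y ^ 7)

-- The numerators below are written in `t = y - 12`, where all their coefficients are positive.
theorem ramanujanStepTolerance_lt_ramanujanStepApprox {y : ℝ} (hy : 12 ≤ y) :
    ramanujanStepTolerance y < ramanujanStepApprox y := by
  obtain ⟨t, ht, rfl⟩ : ∃ t : ℝ, 0 ≤ t ∧ y = t + 12 := ⟨y - 12, by linarith, by ring⟩
  have h0 : 0 < t + 12 := by linarith
  have h1 : 0 < t + 12 + 1 := by linarith
  have key : ramanujanStepApprox (t + 12) - ramanujanStepTolerance (t + 12) =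
      (930332217932076818937847109717600516923 + 1953412202076878880458560301792847235275 * t
        + 1961494175683913085237300694787501283585 * t ^ 2
        + 1254219294869096657212759734570965915975 * t ^ 3
        + 573626453705483987304034037529064146945 * t ^ 4
        + 199805872402934647990360366447837275075 * t ^ 5
        + 55101038961229679824690825260611678185 * t ^ 6
        + 12345909656723549181979905651891677475 * t ^ 7
        + 2288381556827844556223409053355379155 * t ^ 8
        + 355420953363151396315488796106156125 * t ^ 9
        + 46678674673899822145094514039213831 * t ^ 10
        + 5216448035779878797140092846989925 * t ^ 11 + 498001590276006156219808152997115 * t ^ 12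
        + 40694421698421299488667412795825 * t ^ 13 + 2846601993001179457424856069855 * t ^ 14
        + 170151941244386009182327526100 * t ^ 15 + 8658206892121981861503216600 * t ^ 16
        + 372789936459263486038132800 * t ^ 17 + 13461164152096205893446000 * t ^ 18
        + 402541631098698505680000 * t ^ 19 + 9793119047282218368000 * t ^ 20
        + 188923777881992640000 * t ^ 21 + 2780889853132800000 * t ^ 22
        + 29342674414080000 * t ^ 23 + 197660528640000 * t ^ 24 + 638668800000 * t ^ 25)
        / (167215104000000 * (t + 12) ^ 15 * (t + 12 + 1) ^ 15) := by
    simp only [ramanujanStepApprox, ramanujanStepTolerance, logOneAddTaylor_five,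
      logOneAddTaylor_eight, ramanujanTail]
    field_simp
    ring
  rw [← sub_pos, key]
  positivity

theorem ramanujanStepApprox_add_ramanujanStepTolerance_lt {y : ℝ} (hy : 12 ≤ y) :
    ramanujanStepApprox y + ramanujanStepTolerance y <
      ramanujanErrorBound y - ramanujanErrorBound (y + 1) := by
  obtain ⟨t, ht, rfl⟩ : ∃ t : ℝ, 0 ≤ t ∧ y = t + 12 := ⟨y - 12, by linarith, by ring⟩
  have h0 : 0 < t + 12 := by linarith
  have h1 : 0 < t + 12 + 1 := by linarith
  have h2 : 0 < t + 12 - 5 := by linarith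
  have h3 : 0 < t + 12 + 1 - 5 := by linarith
  have key : ramanujanErrorBound (t + 12) - ramanujanErrorBound (t + 12 + 1)
        - (ramanujanStepApprox (t + 12) + ramanujanStepTolerance (t + 12)) =
      (192354800918457200497400288435955358495489544192
        + 534211090177201352366151692453958192702751979520 * t
        + 718065024229531455100232082976844147454717136768 * t ^ 2
        + 622235677563646711857395151068234910370979184160 * t ^ 3
        + 390632444729160077065269891610422645888817360197 * t ^ 4
        + 189290108136962093039174967107663054665593126785 * t ^ 5
        + 73657969633370470338880755372818292446180566473 * t ^ 6
        + 23642492247542965568780220548948186539981553895 * t ^ 7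
        + 6380741564937676019237549265047701250339154822 * t ^ 8
        + 1468614576382291881369623378111030583784574800 * t ^ 9
        + 291375943764072582060750103801881266054933304 * t ^ 10
        + 50241361903267096331996485663038743492402540 * t ^ 11
        + 7576106674458968823730795592460597332638286 * t ^ 12
        + 1003822890595184461226548958352748969873470 * t ^ 13
        + 117271694633062828445862912213337237160734 * t ^ 14
        + 12108188880545186456896095693532727621170 * t ^ 15
        + 1106406432625788822647589215009617164816 * t ^ 16
        + 89516144733715175828500343387234470940 * t ^ 17
        + 6409905257963398258152127267954086704 * t ^ 18
        + 405676469867416755801053759146036425 * t ^ 19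
        + 22639938766474356617292284383207015 * t ^ 20
        + 1110332835271442720477038900458675 * t ^ 21 + 47629749205578035676915419093745 * t ^ 22
        + 1776026761601608767355939610700 * t ^ 23 + 57098958199116009193381643400 * t ^ 24
        + 1565950308082405505440387200 * t ^ 25 + 36120898428843304416762000 * t ^ 26
        + 687481875445485178800000 * t ^ 27 + 10511161740923317632000 * t ^ 28
        + 124095216981234240000 * t ^ 29 + 1061853088250880000 * t ^ 30
        + 5860181675520000 * t ^ 31 + 15660656640000 * t ^ 32)
        / (167215104000000 * (t + 12) ^ 15 * (t + 12 + 1) ^ 15 * (t + 12 - 5) ^ 4 *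
          (t + 12 + 1 - 5) ^ 4) := by
    simp only [ramanujanErrorBound, ramanujanStepApprox, ramanujanStepTolerance,
      logOneAddTaylor_five, logOneAddTaylor_eight, ramanujanTail]
    field_simp
    ring
  rw [← sub_pos, key]
  positivity

theorem ramanujanError_sub_ramanujanError_add_one_bounds {y : ℝ} (hy : 12 ≤ y) :
    0 < ramanujanError y - ramanujanError (y + 1) ∧
      ramanujanError y - ramanujanError (y + 1) <
        ramanujanErrorBound y - ramanujanErrorBound (y + 1) := by
  have h1 := abs_ramanujanCorrection_sub_le hy
  have h2 := abs_ramanujanCorrection_sub_le (z := y + 1) (by linarith)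
  have h3 := abs_mul_log_one_add_inv_sub_le hy
  have hstep := stirlingError_sub_stirlingError_add_one (by linarith : 0 < y)
  have hlow := ramanujanStepTolerance_lt_ramanujanStepApprox hy
  have hup := ramanujanStepApprox_add_ramanujanStepTolerance_lt hy
  rw [abs_le] at h1 h2 h3
  unfold ramanujanStepApprox ramanujanStepTolerance at hlow hup
  unfold ramanujanError
  constructor <;> linarith

theorem lt_of_tendsto_of_succ_lt {α : Type*} [TopologicalSpace α] [Preorder α]
    [OrderClosedTopology α] {u : ℕ → α} {a : α} (hu : Tendsto u atTop (𝓝 a))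
    (h : ∀ k, u (k + 1) < u k) : a < u 0 :=
  ((antitone_nat_of_succ_le fun k => (h k).le).le_of_tendsto hu 1).trans_lt (h 0)

theorem ramanujanError_pos_and_lt {x : ℝ} (hx : 12 ≤ x) :
    0 < ramanujanError x ∧ ramanujanError x < ramanujanErrorBound x := by
  have hstep (k : ℕ) := ramanujanError_sub_ramanujanError_add_one_bounds (y := x + k)
    (by linarith [k.cast_nonneg (α := ℝ)])
  have hshift (k : ℕ) : x + ↑(k + 1) = x + k + 1 := by push_cast; ring
  have hto : Tendsto (fun k : ℕ => x + k) atTop atTop :=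
    tendsto_atTop_add_const_left _ x tendsto_natCast_atTop_atTop
  have hF : Tendsto (fun k : ℕ => ramanujanError (x + k)) atTop (𝓝 0) := by
    have h := (tendsto_ramanujanCorrection_atTop.comp hto).sub
      (tendsto_stirlingError_add_natCast (by linarith : (0 : ℝ) ≤ x))
    rwa [sub_zero] at h
  have hB : Tendsto (fun k : ℕ => ramanujanErrorBound (x + k)) atTop (𝓝 0) :=
    tendsto_ramanujanErrorBound_atTop.comp hto
  constructor
  · simpa using lt_of_tendsto_of_succ_lt hF fun k => by rw [hshift]; linarith [(hstep k).1]
  · simpa using lt_of_tendsto_of_succ_lt (hB.sub hF) fun k => by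
      simp only [hshift]; linarith [(hstep k).2]

theorem pi_rpow_div_Gamma_eq {n : ℝ} (hn : 0 < n) :
    π ^ (n / 2) / Gamma (n / 2 + 1) =
      1 / √π * (2 * π * exp 1 / n) ^ (n / 2) *
        (n ^ 3 + n ^ 2 + n / 2 + 1 / 30) ^ (-(1 / 6) : ℝ) * exp (ramanujanError (n / 2)) := by
  set x := n / 2 with hx
  have hx0 : 0 < x := by positivity
  have hn2 : n = 2 * x := by rw [hx]; ring
  have hΓ : 0 < Gamma (x + 1) := Gamma_pos_of_pos (by linarith)
  have htail : 0 < 1 + ramanujanTail x := by linarith [ramanujanTail_pos hx0]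
  have hcubic : n ^ 3 + n ^ 2 + n / 2 + 1 / 30 = 2 ^ 3 * x ^ 3 * (1 + ramanujanTail x) := by
    rw [hn2, ramanujanTail]; field_simp; ring
  have hbase : 2 * π * exp 1 / n = π * exp 1 / x := by rw [hn2]; field_simp
  have hlhs : 0 < π ^ x / Gamma (x + 1) := by positivity
  have hrhs : 0 < 1 / √π * (π * exp 1 / x) ^ x *
      (2 ^ 3 * x ^ 3 * (1 + ramanujanTail x)) ^ (-(1 / 6) : ℝ) := by positivity
  rw [hcubic, hbase, ← exp_log hlhs, ← exp_log hrhs, ← exp_add]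
  congr 1
  rw [log_div (by positivity) hΓ.ne', log_rpow pi_pos, log_mul (by positivity) (by positivity),
    log_mul (by positivity) (by positivity), log_rpow (by positivity), log_rpow (by positivity),
    one_div, log_inv, log_sqrt pi_pos.le, log_div (by positivity) hx0.ne',
    log_mul pi_pos.ne' (exp_pos 1).ne', log_exp, log_mul (by positivity) htail.ne',
    log_mul (by positivity) (by positivity), log_pow, log_pow, ramanujanError, ramanujanCorrection,
    stirlingError, log_mul two_ne_zero pi_pos.ne']
  ring

theorem stmt_11 (Ω : ℕ → ℝ)
    (hΩ : ∀ n : ℕ, Ω n = Real.pi ^ ((n : ℝ) / 2) / Real.Gamma ((n : ℝ) / 2 + 1)) :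
    ∀ n : ℕ, 24 ≤ n →
      (1 / Real.sqrt Real.pi) * (2 * Real.pi * Real.exp 1 / n) ^ ((n : ℝ) / 2) *
          ((n : ℝ) ^ 3 + (n : ℝ) ^ 2 + (n : ℝ) / 2 + 1 / 30) ^ (-(1 / 6) : ℝ) < Ω n ∧
        Ω n <
          (1 / Real.sqrt Real.pi) * (2 * Real.pi * Real.exp 1 / n) ^ ((n : ℝ) / 2) *
              ((n : ℝ) ^ 3 + (n : ℝ) ^ 2 + (n : ℝ) / 2 + 1 / 30) ^ (-(1 / 6) : ℝ) *
            Real.exp (11 / (720 * ((n : ℝ) - 10) ^ 4)) := by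
  intro n hn
  have hn24 : (24 : ℝ) ≤ n := by exact_mod_cast hn
  have hn0 : (0 : ℝ) < n := by linarith
  obtain ⟨hpos, hlt⟩ := ramanujanError_pos_and_lt (x := n / 2) (by linarith)
  have hbound : ramanujanErrorBound (n / 2) = 11 / (720 * ((n : ℝ) - 10) ^ 4) := by
    rw [ramanujanErrorBound]; ring
  have hA : 0 < 1 / √π * (2 * π * exp 1 / n) ^ ((n : ℝ) / 2) *
      ((n : ℝ) ^ 3 + (n : ℝ) ^ 2 + (n : ℝ) / 2 + 1 / 30) ^ (-(1 / 6) : ℝ) := by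
    have : 0 < 2 * π * exp 1 / n := by positivity
    positivity
  rw [hΩ, pi_rpow_div_Gamma_eq hn0]
  exact ⟨lt_mul_of_one_lt_right hA (one_lt_exp_iff.2 hpos),
    mul_lt_mul_of_pos_left (exp_lt_exp.2 (hbound ▸ hlt)) hA⟩
end

section
/- For every real x ≥ 12, √π·(x/e)^x·(8x³+4x²+x+1/30)^{1/6}·exp(-11/(11520(x-5)⁴)) < Γ(x+1) < √π·(x/e)^x·(8x³+4x²+x+1/30)^{1/6}. -/
/-!
Let μ(x) = log Γ(x) - (x - 1/2) log x + x - log(2π)/2 be Binet's remainder in Stirling's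
formula. Its one-step difference is μ(x) - μ(x + 1) = (x + 1/2) log(1 + 1/x) - 1
= ∑_{k ≥ 1} z^(2k)/(2k + 1) with z = 1/(2x + 1). Truncating this series from below, and bounding
its tail by a geometric series from above, squeezes the step between the steps of
1/(12x) - 1/(360x³) and of 1/(12x) - 1/(360x³) + 1/(1260x⁵) (rational identities with positive
numerators). Since μ(x + n) → 0 by Euler's limit formula and Stirling's formula, telescoping gives
these two bounds on μ(x) for every x > 0.

After taking logarithms, the claim says that μ(x) lies between log(1 + u)/6 - 11/(11520(x - 5)⁴)
and log(1 + u)/6, where 1 + u = (8x³ + 4x² + x + 1/30)/(8x³), i.e. u = t/2 + t²/8 + t³/240 with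
t = 1/x. The alternating Taylor bounds for log(1 + u) reduce both inequalities to polynomial
inequalities in t ∈ (0, 1/12].
-/

open Real Filter Topology Finset

namespace Real

theorem le_of_forall_sub_add_one_le {f g : ℝ → ℝ} {x : ℝ}
    (hstep : ∀ y ≥ x, f y - f (y + 1) ≤ g y - g (y + 1))
    (hlim : Tendsto (fun n : ℕ => g (x + n) - f (x + n)) atTop (𝓝 0)) : f x ≤ g x := by
  have hanti : Antitone fun n : ℕ => g (x + n) - f (x + n) := by
    refine antitone_nat_of_succ_le fun n => ?_
    have := hstep (x + n) (le_add_of_nonneg_right n.cast_nonneg)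
    push_cast
    rw [← add_assoc]
    linarith
  simpa using hanti.le_of_tendsto hlim 0

theorem log_one_add_alternating_bounds {u : ℝ} (h0 : 0 ≤ u) (h1 : u < 1) (k : ℕ) :
    ∑ i ∈ range (2 * k), (-1) ^ i * (u ^ (i + 1) / (i + 1)) ≤ log (1 + u) ∧
      log (1 + u) ≤ ∑ i ∈ range (2 * k + 1), (-1) ^ i * (u ^ (i + 1) / (i + 1)) := by
  have hsum : HasSum (fun i : ℕ => (-1) ^ i * (u ^ (i + 1) / (i + 1))) (log (1 + u)) := by
    have h := (hasSum_pow_div_log_of_abs_lt_one (x := -u) (by rwa [abs_neg, abs_of_nonneg h0])).neg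
    rw [sub_neg_eq_add, neg_neg] at h
    have e : (fun i : ℕ => (-1 : ℝ) ^ i * (u ^ (i + 1) / (i + 1))) =
        fun i : ℕ => -((-u) ^ (i + 1) / (i + 1)) := by
      funext i
      rw [neg_pow u, pow_succ (-1 : ℝ)]
      ring
    rw [e]
    exact h
  have hanti : Antitone fun i : ℕ => u ^ (i + 1) / (i + 1) := by
    refine antitone_nat_of_succ_le fun i => ?_
    push_cast
    exact div_le_div₀ (by positivity) (pow_le_pow_of_le_one h0 h1.le (Nat.le_succ _))
      (by positivity) (by linarith)
  exact ⟨hanti.alternating_series_le_tendsto hsum.tendsto_sum_nat k,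
    hanti.tendsto_le_alternating_series hsum.tendsto_sum_nat k⟩

theorem taylor_four_le_log_one_add {u : ℝ} (h0 : 0 ≤ u) (h1 : u < 1) :
    u - u ^ 2 / 2 + u ^ 3 / 3 - u ^ 4 / 4 ≤ log (1 + u) := by
  have h := (log_one_add_alternating_bounds h0 h1 2).1
  norm_num [sum_range_succ] at h
  linarith

theorem log_one_add_le_taylor_five {u : ℝ} (h0 : 0 ≤ u) (h1 : u < 1) :
    log (1 + u) ≤ u - u ^ 2 / 2 + u ^ 3 / 3 - u ^ 4 / 4 + u ^ 5 / 5 := by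
  have h := (log_one_add_alternating_bounds h0 h1 2).2
  norm_num [sum_range_succ] at h
  linarith

theorem hasSum_add_half_mul_log_one_add_inv {x : ℝ} (hx : 0 < x) :
    HasSum (fun k : ℕ => (1 / (2 * x + 1)) ^ (2 * k) / (2 * k + 1))
      ((x + 1 / 2) * log (1 + x⁻¹)) := by
  have h := (hasSum_log_one_add_inv hx).mul_left (x + 1 / 2)
  have e : (fun k : ℕ => (x + 1 / 2) * (2 * (1 / (2 * k + 1)) * (1 / (2 * x + 1)) ^ (2 * k + 1))) =
      fun k : ℕ => (1 / (2 * x + 1)) ^ (2 * k) / (2 * k + 1) := by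
    funext k
    rw [pow_succ]
    field_simp
  rwa [e] at h

theorem add_half_mul_log_one_add_inv_bounds {x : ℝ} (hx : 0 < x) :
    let z := 1 / (2 * x + 1)
    1 + z ^ 2 / 3 + z ^ 4 / 5 ≤ (x + 1 / 2) * log (1 + x⁻¹) ∧
      (x + 1 / 2) * log (1 + x⁻¹) ≤ 1 + z ^ 2 / 3 + z ^ 4 / 5 + z ^ 6 / (7 * (1 - z ^ 2)) := by
  intro z
  have hz0 : 0 < z := by positivity
  have hz2 : z ^ 2 < 1 := by
    have : z < 1 := by rw [div_lt_one (by linarith)]; linarith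
    nlinarith
  have h := hasSum_add_half_mul_log_one_add_inv hx
  have hhead : ∑ k ∈ range 3, z ^ (2 * k) / (2 * k + 1) = 1 + z ^ 2 / 3 + z ^ 4 / 5 := by
    norm_num [sum_range_succ]
  constructor
  · rw [← hhead]
    exact sum_le_hasSum _ (fun k _ => by positivity) h
  · have htail := (hasSum_nat_add_iff' 3).mpr h
    have hgeom := (hasSum_geometric_of_lt_one (sq_nonneg z) hz2).mul_left (z ^ 6 / 7)
    have hle := hasSum_le (fun k => ?_) htail hgeom
    · rw [hhead] at hle
      have hgeom_sum : z ^ 6 / 7 * (1 - z ^ 2)⁻¹ = z ^ 6 / (7 * (1 - z ^ 2)) := by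
        rw [← div_eq_mul_inv, div_div]
      linarith
    · have hk : (7 : ℝ) ≤ 2 * ((k + 3 : ℕ) : ℝ) + 1 := by
        push_cast
        linarith [k.cast_nonneg (α := ℝ)]
      calc z ^ (2 * (k + 3)) / (2 * ((k + 3 : ℕ) : ℝ) + 1) ≤ z ^ (2 * (k + 3)) / 7 := by gcongr
        _ = z ^ 6 / 7 * (z ^ 2) ^ k := by ring

noncomputable def binetRemainder (x : ℝ) : ℝ :=
  log (Gamma x) - (x - 1 / 2) * log x + x - log (2 * π) / 2

noncomputable def binetLower (x : ℝ) : ℝ := 1 / (12 * x) - 1 / (360 * x ^ 3)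

noncomputable def binetUpper (x : ℝ) : ℝ := binetLower x + 1 / (1260 * x ^ 5)

theorem binetRemainder_sub_binetRemainder_add_one {x : ℝ} (hx : 0 < x) :
    binetRemainder x - binetRemainder (x + 1) = (x + 1 / 2) * log (1 + x⁻¹) - 1 := by
  have hlog : log (1 + x⁻¹) = log (x + 1) - log x := by
    rw [← log_div (by linarith) hx.ne']
    congr 1
    field_simp
  rw [binetRemainder, binetRemainder, Gamma_add_one hx.ne',
    log_mul hx.ne' (Gamma_pos_of_pos hx).ne', hlog]
  ring

theorem tendsto_one_div_const_mul_pow_atTop {c : ℝ} (hc : 0 < c) {k : ℕ} (hk : k ≠ 0) :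
    Tendsto (fun y : ℝ => 1 / (c * y ^ k)) atTop (𝓝 0) :=
  tendsto_const_nhds.div_atTop ((tendsto_pow_atTop hk).const_mul_atTop hc)

theorem tendsto_binetLower_atTop : Tendsto binetLower atTop (𝓝 0) := by
  have h := (tendsto_one_div_const_mul_pow_atTop (c := 12) (by norm_num) one_ne_zero).sub
    (tendsto_one_div_const_mul_pow_atTop (c := 360) (by norm_num) (k := 3) (by norm_num))
  rw [sub_zero] at h
  exact h.congr fun y => by rw [binetLower, pow_one]

theorem tendsto_binetUpper_atTop : Tendsto binetUpper atTop (𝓝 0) := by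
  have h := tendsto_binetLower_atTop.add
    (tendsto_one_div_const_mul_pow_atTop (c := 1260) (by norm_num) (k := 5) (by norm_num))
  rw [add_zero] at h
  exact h.congr fun y => by rw [binetUpper]

theorem binetLower_sub_binetLower_add_one_le {x : ℝ} (hx : 0 < x) :
    let z := 1 / (2 * x + 1)
    binetLower x - binetLower (x + 1) ≤ z ^ 2 / 3 + z ^ 4 / 5 := by
  intro z
  have key : z ^ 2 / 3 + z ^ 4 / 5 - (binetLower x - binetLower (x + 1)) =
      (1 + 11 * x + 21 * x ^ 2 + 20 * x ^ 3 + 10 * x ^ 4) /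
        (360 * x ^ 3 * (x + 1) ^ 3 * (2 * x + 1) ^ 4) := by
    simp only [z, binetLower]
    field_simp
    ring
  rw [← sub_nonneg, key]
  positivity

theorem le_binetUpper_sub_binetUpper_add_one {x : ℝ} (hx : 0 < x) :
    let z := 1 / (2 * x + 1)
    z ^ 2 / 3 + z ^ 4 / 5 + z ^ 6 / (7 * (1 - z ^ 2)) ≤ binetUpper x - binetUpper (x + 1) := by
  intro z
  have hz2 : 1 - z ^ 2 = 4 * x * (x + 1) / (2 * x + 1) ^ 2 := by
    simp only [z]
    field_simp
    ring
  have key : binetUpper x - binetUpper (x + 1) - (z ^ 2 / 3 + z ^ 4 / 5 + z ^ 6 / (7 * (1 - z ^ 2))) =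
      (2 + 34 * x + 253 * x ^ 2 + 1061 * x ^ 3 + 2740 * x ^ 4 + 4477 * x ^ 5 + 4535 * x ^ 6 +
        2608 * x ^ 7 + 652 * x ^ 8) / (2520 * x ^ 5 * (x + 1) ^ 5 * (2 * x + 1) ^ 6) := by
    rw [hz2]
    simp only [z, binetUpper, binetLower]
    field_simp
    ring
  rw [← sub_nonneg, key]
  positivity

theorem log_Gamma_add_nat_add_logGammaSeq {x : ℝ} (hx : 0 < x) (n : ℕ) :
    log (Gamma (x + (n + 1 : ℕ))) + BohrMollerup.logGammaSeq x n =
      log (Gamma x) + x * log n + log n.factorial := by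
  have h := BohrMollerup.f_add_nat_eq (f := log ∘ Gamma) (fun {y} hy => ?_) hx (n + 1)
  · simp only [Function.comp_apply] at h
    rw [h, BohrMollerup.logGammaSeq]
    ring
  · rw [Function.comp_apply, Function.comp_apply, Gamma_add_one hy.ne',
      log_mul hy.ne' (Gamma_pos_of_pos hy).ne', add_comm]

theorem tendsto_add_mul_log_one_add_div_atTop (a c : ℝ) :
    Tendsto (fun y : ℝ => (y + c) * log (1 + a / y)) atTop (𝓝 a) := by
  have hlog_zero : Tendsto (fun y : ℝ => log (1 + a / y)) atTop (𝓝 0) := by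
    have h : Tendsto (fun y : ℝ => 1 + a / y) atTop (𝓝 1) := by
      simpa using (tendsto_const_nhds.div_atTop tendsto_id).const_add (1 : ℝ)
    simpa [Function.comp_def] using (continuousAt_log one_ne_zero).tendsto.comp h
  simpa [add_mul] using (tendsto_mul_log_one_add_div_atTop a).add (hlog_zero.const_mul c)

theorem tendsto_binetRemainder_add_nat {x : ℝ} (hx : 0 < x) :
    Tendsto (fun n : ℕ => binetRemainder (x + n)) atTop (𝓝 0) := by
  rw [← tendsto_add_atTop_iff_nat 1]
  have hsplit : ∀ᶠ n : ℕ in atTop, binetRemainder (x + (n + 1 : ℕ)) =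
      (log (Gamma x) - BohrMollerup.logGammaSeq x n) +
        (log (Stirling.stirlingSeq n) - log √π) +
        (x + 1 - (n + (x + 1 / 2)) * log (1 + (x + 1) / n)) := by
    filter_upwards [eventually_ge_atTop 1] with n hn
    have hn0 : (0 : ℝ) < n := by exact_mod_cast hn
    have hlog : log (1 + (x + 1) / n) = log (x + (n + 1 : ℕ)) - log n := by
      rw [← log_div (by positivity) hn0.ne']
      congr 1
      field_simp
      push_cast
      ring
    rw [hlog, Stirling.log_stirlingSeq_formula, log_div hn0.ne' (exp_ne_zero 1), log_exp,
      log_mul two_ne_zero hn0.ne', log_sqrt pi_pos.le, binetRemainder,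
      log_mul two_ne_zero pi_pos.ne']
    have h := log_Gamma_add_nat_add_logGammaSeq hx n
    push_cast at h ⊢
    linear_combination h
  refine Tendsto.congr' (EventuallyEq.symm hsplit) ?_
  have hGammaSeq := (BohrMollerup.tendsto_log_gamma hx).const_sub (log (Gamma x))
  have hStirling := ((continuousAt_log (sqrt_pos.mpr pi_pos).ne').tendsto.comp
    Stirling.tendsto_stirlingSeq_sqrt_pi).sub_const (log √π)
  simpa using (hGammaSeq.add hStirling).add
    (((tendsto_add_mul_log_one_add_div_atTop (x + 1) (x + 1 / 2)).comp
      tendsto_natCast_atTop_atTop).const_sub (x + 1))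

theorem binetRemainder_bounds {x : ℝ} (hx : 0 < x) :
    binetLower x ≤ binetRemainder x ∧ binetRemainder x ≤ binetUpper x := by
  have hshift : Tendsto (fun n : ℕ => x + n) atTop atTop :=
    tendsto_atTop_add_const_left _ x tendsto_natCast_atTop_atTop
  have hμ := tendsto_binetRemainder_add_nat hx
  constructor
  · refine le_of_forall_sub_add_one_le (fun y hy => ?_) ?_
    · have hy0 := hx.trans_le hy
      rw [binetRemainder_sub_binetRemainder_add_one hy0]
      linarith [binetLower_sub_binetLower_add_one_le hy0,
        (add_half_mul_log_one_add_inv_bounds hy0).1]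
    · simpa using hμ.sub (tendsto_binetLower_atTop.comp hshift)
  · refine le_of_forall_sub_add_one_le (fun y hy => ?_) ?_
    · have hy0 := hx.trans_le hy
      rw [binetRemainder_sub_binetRemainder_add_one hy0]
      linarith [le_binetUpper_sub_binetUpper_add_one hy0,
        (add_half_mul_log_one_add_inv_bounds hy0).2]
    · simpa using (tendsto_binetUpper_atTop.comp hshift).sub hμ

theorem log_ramanujan_eq {x : ℝ} (hx : 0 < x) :
    log (√π * (x / exp 1) ^ x * (8 * x ^ 3 + 4 * x ^ 2 + x + 1 / 30) ^ ((1 : ℝ) / 6)) =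
      log (Gamma (x + 1)) - binetRemainder x +
        log ((8 * x ^ 3 + 4 * x ^ 2 + x + 1 / 30) / (8 * x ^ 3)) / 6 := by
  have hP : 0 < 8 * x ^ 3 + 4 * x ^ 2 + x + 1 / 30 := by positivity
  rw [log_mul (by positivity) (by positivity), log_mul (by positivity) (by positivity),
    log_sqrt pi_pos.le, log_rpow (by positivity), log_rpow hP,
    log_div hx.ne' (exp_ne_zero 1), log_exp, log_div hP.ne' (by positivity),
    Gamma_add_one hx.ne', log_mul hx.ne' (Gamma_pos_of_pos hx).ne', binetRemainder,
    log_mul two_ne_zero pi_pos.ne', show (8 : ℝ) * x ^ 3 = 2 ^ 3 * x ^ 3 by norm_num,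
    log_mul (by positivity) (by positivity), log_pow, log_pow]
  push_cast
  ring

theorem ramanujan_div_eq {x : ℝ} (hx : x ≠ 0) :
    (8 * x ^ 3 + 4 * x ^ 2 + x + 1 / 30) / (8 * x ^ 3) =
      1 + (x⁻¹ / 2 + x⁻¹ ^ 2 / 8 + x⁻¹ ^ 3 / 240) := by
  field_simp
  ring

theorem binetUpper_lt_log_ramanujan {x : ℝ} (hx : 12 ≤ x) :
    binetUpper x <
      log ((8 * x ^ 3 + 4 * x ^ 2 + x + 1 / 30) / (8 * x ^ 3)) / 6 := by
  rw [ramanujan_div_eq (by positivity)]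
  set t := x⁻¹ with ht
  have ht0 : 0 < t := by positivity
  have ht12 : t ≤ 1 / 12 := by rw [ht, one_div]; exact inv_anti₀ (by norm_num) hx
  have hlog := taylor_four_le_log_one_add (u := t / 2 + t ^ 2 / 8 + t ^ 3 / 240) (by positivity)
    (by nlinarith)
  have hpoly : 6 * (t / 12 - t ^ 3 / 360 + t ^ 5 / 1260) <
      (t / 2 + t ^ 2 / 8 + t ^ 3 / 240) - (t / 2 + t ^ 2 / 8 + t ^ 3 / 240) ^ 2 / 2 +
        (t / 2 + t ^ 2 / 8 + t ^ 3 / 240) ^ 3 / 3 - (t / 2 + t ^ 2 / 8 + t ^ 3 / 240) ^ 4 / 4 := by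
    have hstep (i : ℕ) : t ^ (i + 1) ≤ 1 / 12 * t ^ i := by
      rw [pow_succ']; exact mul_le_mul_of_nonneg_right ht12 (by positivity)
    nlinarith [hstep 4, hstep 5, hstep 6, hstep 7, hstep 8, hstep 9, hstep 10, hstep 11,
      pow_pos ht0 4]
  have hx_t : binetUpper x = t / 12 - t ^ 3 / 360 + t ^ 5 / 1260 := by
    rw [binetUpper, binetLower, ht]; field_simp
  linarith

theorem log_ramanujan_sub_lt_binetLower {x : ℝ} (hx : 12 ≤ x) :
    log ((8 * x ^ 3 + 4 * x ^ 2 + x + 1 / 30) / (8 * x ^ 3)) / 6 - 11 / (11520 * (x - 5) ^ 4) <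
      binetLower x := by
  rw [ramanujan_div_eq (by positivity)]
  set t := x⁻¹ with ht
  have ht0 : 0 < t := by positivity
  have ht12 : t ≤ 1 / 12 := by rw [ht, one_div]; exact inv_anti₀ (by norm_num) hx
  have hlog := log_one_add_le_taylor_five (u := t / 2 + t ^ 2 / 8 + t ^ 3 / 240) (by positivity)
    (by nlinarith)
  have hpoly : (t / 2 + t ^ 2 / 8 + t ^ 3 / 240) - (t / 2 + t ^ 2 / 8 + t ^ 3 / 240) ^ 2 / 2 +
      (t / 2 + t ^ 2 / 8 + t ^ 3 / 240) ^ 3 / 3 - (t / 2 + t ^ 2 / 8 + t ^ 3 / 240) ^ 4 / 4 +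
        (t / 2 + t ^ 2 / 8 + t ^ 3 / 240) ^ 5 / 5 <
      6 * (t / 12 - t ^ 3 / 360) + 66 / 11520 * t ^ 4 * (1 + 20 * t) := by
    have hstep (i : ℕ) : t ^ (i + 1) ≤ 1 / 12 * t ^ i := by
      rw [pow_succ']; exact mul_le_mul_of_nonneg_right ht12 (by positivity)
    nlinarith [hstep 5, hstep 6, hstep 7, hstep 8, hstep 9, hstep 10, hstep 11, hstep 12,
      hstep 13, hstep 14, pow_pos ht0 5]
  have hx5 : 0 < x - 5 := by linarith
  -- (x - 5)⁻⁴ = t⁴ (1 - 5t)⁻⁴ ≥ t⁴ (1 + 20t), by Bernoulli's inequality.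
  have hdenom : 66 / 11520 * t ^ 4 * (1 + 20 * t) ≤ 6 * (11 / (11520 * (x - 5) ^ 4)) := by
    have hkey : 6 * (11 / (11520 * (x - 5) ^ 4)) - 66 / 11520 * t ^ 4 * (1 + 20 * t) =
        66 * (x ^ 5 - (x + 20) * (x - 5) ^ 4) / (11520 * (x - 5) ^ 4 * x ^ 5) := by
      rw [ht]; field_simp; ring
    have hnum : 0 ≤ x ^ 5 - (x + 20) * (x - 5) ^ 4 := by
      have h12 : 0 ≤ x - 12 := by linarith
      have hid : x ^ 5 - (x + 20) * (x - 5) ^ 4 =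
          250 * (x - 12) ^ 3 + 6500 * (x - 12) ^ 2 + 57375 * (x - 12) + 172000 := by ring
      rw [hid]; positivity
    rw [← sub_nonneg, hkey]
    positivity
  have hx_t : binetLower x = t / 12 - t ^ 3 / 360 := by
    rw [binetLower, ht]; field_simp
  linarith

end Real

theorem stmt_12 :
    ∀ x : ℝ, 12 ≤ x →
      Real.sqrt Real.pi * (x / Real.exp 1) ^ x *
            (8 * x ^ 3 + 4 * x ^ 2 + x + 1 / 30) ^ ((1 : ℝ) / 6) *
          Real.exp (-11 / (11520 * (x - 5) ^ 4)) < Real.Gamma (x + 1) ∧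
        Real.Gamma (x + 1) <
          Real.sqrt Real.pi * (x / Real.exp 1) ^ x *
            (8 * x ^ 3 + 4 * x ^ 2 + x + 1 / 30) ^ ((1 : ℝ) / 6) := by
  intro x hx
  have hx0 : 0 < x := by linarith
  obtain ⟨hlow, hupp⟩ := binetRemainder_bounds hx0
  have hlog := log_ramanujan_eq hx0
  have hGamma : 0 < Gamma (x + 1) := Gamma_pos_of_pos (by linarith)
  have hR : 0 < √π * (x / exp 1) ^ x * (8 * x ^ 3 + 4 * x ^ 2 + x + 1 / 30) ^ ((1 : ℝ) / 6) := by
    positivity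
  rw [← exp_log hR, ← exp_log hGamma, ← exp_add, exp_lt_exp, exp_lt_exp, hlog, neg_div]
  constructor
  · linarith [log_ramanujan_sub_lt_binetLower hx]
  · linarith [binetUpper_lt_log_ramanujan hx]
end

section
/- Let G₀(x) = 6(1 - x·ln(1+1/x)) + ln(Φ₀(x)/Φ₀(x+1)) with Φ₀(x) = x³ + x²/2 + x/8 + 1/240. Then for all x > 0, 11/(480x⁵) - 29/(336x⁶) < G₀(x) < 11/(480x⁵) - 29/(336x⁶) + 9031/(44800x⁷). -/
/-!
Write `R x = G₀ x - (11 / (480 x⁵) - 29 / (336 x⁶))`. Both `R` and `9031 / (44800 x⁷) - R`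
tend to `0` at infinity, and after clearing denominators their second derivatives are rational
functions with positive coefficients, so both are strictly convex on `(0, ∞)`. A strictly
convex function on a half-line that tends to a limit at infinity is strictly decreasing, hence
stays above that limit.
-/

open Real Filter Set Topology

theorem strictConvexOn_of_hasDerivAt2_pos {D : Set ℝ} (hD : Convex ℝ D) (hDo : IsOpen D)
    {f f' f'' : ℝ → ℝ} (hf : ∀ x ∈ D, HasDerivAt f (f' x) x)
    (hf' : ∀ x ∈ D, HasDerivAt f' (f'' x) x) (hf'' : ∀ x ∈ D, 0 < f'' x) :
    StrictConvexOn ℝ D f := by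
  have hmono : StrictMonoOn f' D := strictMonoOn_of_hasDerivWithinAt_pos hD
    (fun x hx => (hf' x hx).continuousAt.continuousWithinAt)
    (fun x hx => (hf' x (interior_subset hx)).hasDerivWithinAt)
    (fun x hx => hf'' x (interior_subset hx))
  refine StrictMonoOn.strictConvexOn_of_deriv hD
    (fun x hx => (hf x hx).continuousAt.continuousWithinAt) ?_
  rw [hDo.interior_eq]
  exact hmono.congr fun x hx => (hf x hx).deriv.symm

theorem ConvexOn.antitoneOn_of_tendsto {a l : ℝ} {f : ℝ → ℝ} (hf : ConvexOn ℝ (Ioi a) f)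
    (hlim : Tendsto f atTop (𝓝 l)) : AntitoneOn f (Ioi a) := by
  intro x hx y hy hxy
  rcases hxy.eq_or_lt with rfl | hxy
  · rfl
  by_contra! hlt
  -- a positive slope would force `f` to grow at least linearly
  set s := (f y - f x) / (y - x)
  have hs : 0 < s := div_pos (sub_pos.2 hlt) (sub_pos.2 hxy)
  have hline : ∀ z, y < z → f y + s * (z - y) ≤ f z := fun z hz => by
    have := hf.slope_mono_adjacent hx (mem_Ioi.2 (hy.out.trans hz)) hxy hz
    rw [le_div_iff₀ (sub_pos.2 hz)] at this
    linarith
  have hinf : Tendsto f atTop atTop := by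
    refine tendsto_atTop_mono' _ ?_ (((tendsto_id.atTop_add
      (tendsto_const_nhds (x := -y))).const_mul_atTop hs).atTop_add (tendsto_const_nhds (x := f y)))
    filter_upwards [eventually_gt_atTop y] with z hz
    have := hline z hz
    simp only [id]
    linarith
  exact not_tendsto_nhds_of_tendsto_atTop hinf l hlim

theorem StrictConvexOn.lt_of_tendsto {a l x : ℝ} {f : ℝ → ℝ}
    (hf : StrictConvexOn ℝ (Ioi a) f)
    (hlim : Tendsto f atTop (𝓝 l)) (hx : a < x) : l < f x := by
  have hanti := hf.convexOn.antitoneOn_of_tendsto hlim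
  have hmem : ∀ t, 0 ≤ t → x + t ∈ Ioi a := fun t ht => mem_Ioi.2 (by linarith)
  have hslope := hf.slope_strict_mono_adjacent (hmem 0 le_rfl) (hmem 2 zero_le_two)
    (show x + 0 < x + 1 by linarith) (show x + 1 < x + 2 by linarith)
  have h12 : f (x + 2) ≤ f (x + 1) :=
    hanti (hmem 1 zero_le_one) (hmem 2 zero_le_two) (by linarith)
  have hl : l ≤ f (x + 1) := le_of_tendsto hlim <| by
    filter_upwards [eventually_ge_atTop (x + 1)] with z hz
    exact hanti (hmem 1 zero_le_one) (mem_Ioi.2 (by linarith)) hz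
  norm_num at hslope
  linarith

theorem hasDerivAt_const_div_mul_pow (c k : ℝ) (n : ℕ) {x : ℝ} (hx : x ≠ 0) :
    HasDerivAt (fun y => c / (k * y ^ n)) (-(n * c) / (k * x ^ (n + 1))) x := by
  rcases eq_or_ne k 0 with rfl | hk
  · simpa using hasDerivAt_const x (0 : ℝ)
  refine ((hasDerivAt_const x c).div ((hasDerivAt_pow n x).const_mul k)
    (by positivity)).congr_deriv ?_
  cases n with
  | zero => simp
  | succ m => simp only [Nat.add_sub_cancel]; push_cast; field_simp; ring

theorem tendsto_const_div_mul_pow_atTop (c k : ℝ) (n : ℕ) (hk : 0 < k) (hn : n ≠ 0) :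
    Tendsto (fun x => c / (k * x ^ n)) atTop (𝓝 0) :=
  tendsto_const_nhds.div_atTop ((tendsto_pow_atTop hn).const_mul_atTop hk)

theorem hasDerivAt_log_one_add_one_div {x : ℝ} (hx : 0 < x) :
    HasDerivAt (fun y => log (1 + 1 / y)) (-1 / (x * (x + 1))) x := by
  have h := ((hasDerivAt_inv hx.ne').const_add 1).log (by positivity)
  simp only [← one_div] at h
  convert h using 1
  field_simp

noncomputable def Φ (x : ℝ) : ℝ := x ^ 3 + x ^ 2 / 2 + x / 8 + 1 / 240
noncomputable def Φ' (x : ℝ) : ℝ := 3 * x ^ 2 + x + 1 / 8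
noncomputable def Φ'' (x : ℝ) : ℝ := 6 * x + 1

noncomputable def G (x : ℝ) : ℝ := 6 * (1 - x * log (1 + 1 / x)) + log (Φ x) - log (Φ (x + 1))
noncomputable def G' (x : ℝ) : ℝ :=
  -6 * log (1 + 1 / x) + 6 / (x + 1) + Φ' x / Φ x - Φ' (x + 1) / Φ (x + 1)
noncomputable def G'' (x : ℝ) : ℝ :=
  6 / (x * (x + 1) ^ 2) + (Φ'' x * Φ x - Φ' x ^ 2) / Φ x ^ 2
    - (Φ'' (x + 1) * Φ (x + 1) - Φ' (x + 1) ^ 2) / Φ (x + 1) ^ 2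

theorem Φ_pos {x : ℝ} (hx : 0 ≤ x) : 0 < Φ x := by unfold Φ; positivity

theorem hasDerivAt_Φ (x : ℝ) : HasDerivAt Φ (Φ' x) x :=
  ((((hasDerivAt_pow 3 x).add ((hasDerivAt_pow 2 x).div_const 2)).add
    ((hasDerivAt_id' x).div_const 8)).add_const (1 / 240 : ℝ)).congr_deriv <| by
      simp only [Φ']; push_cast; ring

theorem hasDerivAt_Φ' (x : ℝ) : HasDerivAt Φ' (Φ'' x) x :=
  ((((hasDerivAt_pow 2 x).const_mul 3).add (hasDerivAt_id' x)).add_const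
    (1 / 8 : ℝ)).congr_deriv <| by simp only [Φ'']; push_cast; ring

theorem hasDerivAt_G {x : ℝ} (hx : 0 < x) : HasDerivAt G (G' x) x := by
  have h := ((((hasDerivAt_id' x).mul (hasDerivAt_log_one_add_one_div hx)).const_sub 1).const_mul
    6).add ((hasDerivAt_Φ x).log (Φ_pos hx.le).ne') |>.sub
    (((hasDerivAt_Φ (x + 1)).log (Φ_pos (by linarith)).ne').comp_add_const x 1)
  refine h.congr_deriv ?_
  simp only [G']
  field_simp
  ring

theorem hasDerivAt_Φ'_div_Φ {x : ℝ} (hx : 0 ≤ x) :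
    HasDerivAt (fun y => Φ' y / Φ y) ((Φ'' x * Φ x - Φ' x ^ 2) / Φ x ^ 2) x :=
  ((hasDerivAt_Φ' x).div (hasDerivAt_Φ x) (Φ_pos hx).ne').congr_deriv (by ring)

theorem hasDerivAt_G' {x : ℝ} (hx : 0 < x) : HasDerivAt G' (G'' x) x := by
  have h := (((hasDerivAt_log_one_add_one_div hx).const_mul (-6)).add
    ((hasDerivAt_const x (6 : ℝ)).div ((hasDerivAt_id' x).add_const 1) (by positivity))).add
    (hasDerivAt_Φ'_div_Φ hx.le) |>.sub
    ((hasDerivAt_Φ'_div_Φ (x := x + 1) (by positivity)).comp_add_const x 1)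
  refine h.congr_deriv ?_
  simp only [G'']
  field_simp
  ring

theorem tendsto_log_Φ_sub_log_Φ_add_one :
    Tendsto (fun x => log (Φ x) - log (Φ (x + 1))) atTop (𝓝 0) := by
  -- `Φ x / Φ (x + 1)` is a rational function of `1 / x` that equals `1` at `0`
  have hρ : ContinuousAt (fun t : ℝ => log ((1 + t / 2 + t ^ 2 / 8 + t ^ 3 / 240) /
      (1 + 7 * t / 2 + 33 * t ^ 2 / 8 + 391 * t ^ 3 / 240))) 0 := by
    fun_prop (disch := norm_num)
  have h := hρ.tendsto.comp tendsto_inv_atTop_zero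
  norm_num at h
  refine h.congr' ?_
  filter_upwards [eventually_gt_atTop 0] with x hx
  rw [Function.comp_apply, ← log_div (Φ_pos hx.le).ne' (Φ_pos (by positivity)).ne']
  congr 1
  simp only [Φ]
  field_simp
  ring

theorem tendsto_G_atTop : Tendsto G atTop (𝓝 0) := by
  have h := ((tendsto_mul_log_one_add_div_atTop 1).const_sub 1).const_mul 6 |>.add
    tendsto_log_Φ_sub_log_Φ_add_one
  norm_num at h
  exact h.congr fun x => by rw [G, one_div, add_sub_assoc]

noncomputable def remainder (x : ℝ) : ℝ := G x - (11 / (480 * x ^ 5) - 29 / (336 * x ^ 6))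
noncomputable def remainder' (x : ℝ) : ℝ := G' x + 11 / (96 * x ^ 6) - 29 / (56 * x ^ 7)
noncomputable def remainder'' (x : ℝ) : ℝ := G'' x - 11 / (16 * x ^ 7) + 29 / (8 * x ^ 8)

theorem hasDerivAt_remainder {x : ℝ} (hx : 0 < x) : HasDerivAt remainder (remainder' x) x := by
  refine ((hasDerivAt_G hx).sub ((hasDerivAt_const_div_mul_pow 11 480 5 hx.ne').sub
    (hasDerivAt_const_div_mul_pow 29 336 6 hx.ne'))).congr_deriv ?_
  simp only [remainder']
  field_simp
  ring

theorem hasDerivAt_remainder' {x : ℝ} (hx : 0 < x) : HasDerivAt remainder' (remainder'' x) x := by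
  refine (((hasDerivAt_G' hx).add (hasDerivAt_const_div_mul_pow 11 96 6 hx.ne')).sub
    (hasDerivAt_const_div_mul_pow 29 56 7 hx.ne')).congr_deriv ?_
  simp only [remainder'']
  field_simp
  ring

theorem tendsto_remainder_atTop : Tendsto remainder atTop (𝓝 0) := by
  have h := tendsto_G_atTop.sub
    ((tendsto_const_div_mul_pow_atTop 11 480 5 (by norm_num) (by norm_num)).sub
      (tendsto_const_div_mul_pow_atTop 29 336 6 (by norm_num) (by norm_num)))
  rwa [sub_self, sub_zero] at h

theorem remainder''_pos {x : ℝ} (hx : 0 < x) : 0 < remainder'' x := by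
  have key : remainder'' x =
      (4433549/26542080000 + 7906411/707788800*x + 1162293823/4423680000*x^2
        + 148797620029/53084160000*x^3 + 1977761891/110592000*x^4 + 33576362287/442368000*x^5
        + 12469125769/55296000*x^6 + 529343689937/1105920000*x^7 + 41953357/57600*x^8
        + 3628944337/4608000*x^9 + 170086961/288000*x^10 + 1495447/5120*x^11
        + 2142/25*x^12 + 9031/800*x^13)
      / (x^8 * (x+1)^2 * Φ x ^ 2 * Φ (x + 1) ^ 2) := by
    have h0 := (Φ_pos hx.le).ne'
    have h1 := (Φ_pos (x := x + 1) (by positivity)).ne'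
    simp only [Φ] at h0 h1
    simp only [remainder'', G'', Φ, Φ', Φ'']
    field_simp
    ring
  rw [key]
  simp only [Φ]
  positivity

theorem remainder''_lt {x : ℝ} (hx : 0 < x) : remainder'' x < 9031 / (800 * x ^ 9) := by
  have key : 9031 / (800 * x ^ 9) - remainder'' x =
      (1380668311/2654208000000 + 15358283327/442368000000*x + 2159637679261/2654208000000*x^2
        + 190722074047/22118400000*x^3 + 14484951111979/265420800000*x^4
        + 1268301512167/5529600000*x^5 + 744529560881/1105920000*x^6
        + 389047376251/276480000*x^7 + 2321586809887/1105920000*x^8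
        + 1274835557/576000*x^9 + 7414054091/4608000*x^10 + 44183843/57600*x^11
        + 1105481/5120*x^12 + 10883/400*x^13)
      / (x^9 * (x+1)^2 * Φ x ^ 2 * Φ (x + 1) ^ 2) := by
    have h0 := (Φ_pos hx.le).ne'
    have h1 := (Φ_pos (x := x + 1) (by positivity)).ne'
    simp only [Φ] at h0 h1
    simp only [remainder'', G'', Φ, Φ', Φ'']
    field_simp
    ring
  rw [← sub_pos, key]
  simp only [Φ]
  positivity

theorem remainder_pos {x : ℝ} (hx : 0 < x) : 0 < remainder x :=
  (strictConvexOn_of_hasDerivAt2_pos (convex_Ioi 0) isOpen_Ioi (fun _ hy => hasDerivAt_remainder hy)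
    (fun _ hy => hasDerivAt_remainder' hy) (fun _ hy => remainder''_pos hy)).lt_of_tendsto
    tendsto_remainder_atTop hx

theorem remainder_lt {x : ℝ} (hx : 0 < x) : remainder x < 9031 / (44800 * x ^ 7) := by
  have hconvex : StrictConvexOn ℝ (Ioi 0) fun y => 9031 / (44800 * y ^ 7) - remainder y :=
    strictConvexOn_of_hasDerivAt2_pos (convex_Ioi 0) isOpen_Ioi
      (fun y hy => (hasDerivAt_const_div_mul_pow 9031 44800 7 (ne_of_gt hy)).sub
        (hasDerivAt_remainder hy))
      (fun y hy => (hasDerivAt_const_div_mul_pow _ 44800 8 (ne_of_gt hy)).sub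
        (hasDerivAt_remainder' hy))
      (fun y hy => (sub_pos.2 (remainder''_lt hy)).trans_eq (by push_cast; ring))
  have := hconvex.lt_of_tendsto (by
    simpa using (tendsto_const_div_mul_pow_atTop 9031 44800 7 (by norm_num) (by norm_num)).sub
      tendsto_remainder_atTop) hx
  linarith

theorem stmt_13 (Φ₀ G₀ : ℝ → ℝ)
    (hΦ : ∀ x : ℝ, Φ₀ x = x ^ 3 + x ^ 2 / 2 + x / 8 + 1 / 240)
    (hG : ∀ x : ℝ, G₀ x = 6 * (1 - x * Real.log (1 + 1 / x)) +
      Real.log (Φ₀ x) - Real.log (Φ₀ (x + 1))) :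
    ∀ x : ℝ, 0 < x →
      11 / (480 * x ^ 5) - 29 / (336 * x ^ 6) < G₀ x ∧
        G₀ x < 11 / (480 * x ^ 5) - 29 / (336 * x ^ 6) + 9031 / (44800 * x ^ 7) := by
  obtain rfl : Φ₀ = Φ := funext hΦ
  obtain rfl : G₀ = G := funext hG
  intro x hx
  have hpos := remainder_pos hx
  have hlt := remainder_lt hx
  simp only [remainder] at hpos hlt
  constructor <;> linarith
end
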